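/- Let G be a finite loopless multigraph and H a maximum Δ(G)-edge-colorable subgraph of G, properly edge-colored with colors 1,…,Δ(G), and let the uncolored edges be e_i = (u_i, v_i) for 1 ≤ i ≤ n. Then there is an assignment of colors α_1 missing at u_1, β_1 missing at v_1, …, α_n missing at u_n, β_n missing at v_n, such that the corresponding odd cycles C^{e_i}_{α_i,β_i} are pairwise edge-disjoint: E(C^{e_i}_{α_i,β_i}) ∩ E(C^{e_j}_{α_j,β_j}) = ∅ for all 1 ≤ i < j ≤ n. -/

import Mathlib

/-- A finite undirected multigraph without loops: `inc e` is the (unordered)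
pair of endpoints of the edge `e`. -/
structure Multigraph (V : Type) (E : Type) where
  inc : E → Sym2 V
  loopless : ∀ e : E, ¬ (inc e).IsDiag

namespace Multigraph

variable {V E : Type}

/-- The degree of the vertex `v` in the subgraph with edge set `S`. -/
noncomputable def degOn (G : Multigraph V E) (S : Set E) (v : V) : ℕ :=
  {e | e ∈ S ∧ v ∈ G.inc e}.ncard

/-- The degree of the vertex `v` in `G`. -/
noncomputable def deg (G : Multigraph V E) (v : V) : ℕ :=
  G.degOn Set.univ v

/-- The maximum degree `Δ(G)` of `G`. -/
noncomputable def maxDeg (G : Multigraph V E) [Fintype V] : ℕ :=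
  Finset.univ.sup G.deg

/-- The maximum degree of the subgraph of `G` with edge set `S`. -/
noncomputable def maxDegOn (G : Multigraph V E) [Fintype V] (S : Set E) : ℕ :=
  Finset.univ.sup (G.degOn S)

/-- The minimum degree of the subgraph of `G` with edge set `S`. -/
noncomputable def minDegOn (G : Multigraph V E) [Fintype V] [Nonempty V] (S : Set E) : ℕ :=
  Finset.univ.inf' Finset.univ_nonempty (G.degOn S)

/-- `c` is a proper edge coloring of the subgraph of `G` with edge set `S`,
using the `n` colors `0, …, n-1`: distinct edges of `S` sharing a vertex get
distinct colors. -/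
def ProperOn (G : Multigraph V E) (S : Set E) (c : E → ℕ) (n : ℕ) : Prop :=
  (∀ e ∈ S, c e < n) ∧
    ∀ e ∈ S, ∀ f ∈ S, e ≠ f → (∃ v : V, v ∈ G.inc e ∧ v ∈ G.inc f) → c e ≠ c f

/-- The subgraph with edge set `S` is properly `n`-edge-colorable. -/
def ColorableOn (G : Multigraph V E) (S : Set E) (n : ℕ) : Prop :=
  ∃ c : E → ℕ, G.ProperOn S c n

/-- The chromatic index of the subgraph of `G` with edge set `S`. -/
noncomputable def chromIndexOn (G : Multigraph V E) (S : Set E) : ℕ :=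
  sInf {n | G.ColorableOn S n}

/-- The chromatic index `χ'(G)`. -/
noncomputable def chromIndex (G : Multigraph V E) : ℕ :=
  G.chromIndexOn Set.univ

/-- `S` is (the edge set of) a maximum `Δ(G)`-edge-colorable subgraph of `G`:
it is `Δ(G)`-edge-colorable and has as many edges as possible. -/
def IsMaxColorable (G : Multigraph V E) [Fintype V] (S : Set E) : Prop :=
  G.ColorableOn S G.maxDeg ∧
    ∀ T : Set E, G.ColorableOn T G.maxDeg → T.ncard ≤ S.ncard

/-- The color `α` is missing at the vertex `v` (w.r.t. the coloring `c` of the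
subgraph with edge set `S`): no colored edge incident with `v` has color `α`. -/
def MissingAt (G : Multigraph V E) (S : Set E) (c : E → ℕ) (α : ℕ) (v : V) : Prop :=
  ∀ e ∈ S, v ∈ G.inc e → c e ≠ α

/-- The maximum multiplicity `μ(G)` of an edge of `G`. -/
noncomputable def maxMult (G : Multigraph V E) [Fintype V] : ℕ :=
  Finset.univ.sup fun p : V × V => {e | G.inc e = s(p.1, p.2)}.ncard

/-- The underlying simple graph of `G`. -/
def toSimple (G : Multigraph V E) : SimpleGraph V where
  Adj u v := u ≠ v ∧ ∃ e : E, G.inc e = s(u, v)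
  symm := by
    constructor
    intro u v h
    exact ⟨Ne.symm h.1, by obtain ⟨e, he⟩ := h.2; exact ⟨e, by rw [he, Sym2.eq_swap]⟩⟩
  loopless := by constructor; intro v h; exact h.1 rfl

/-- Walks in a multigraph. -/
inductive Walk (G : Multigraph V E) : V → V → Type
  | nil (v : V) : Walk G v v
  | cons {u v w : V} (e : E) (h : G.inc e = s(u, v)) (p : Walk G v w) : Walk G u w

namespace Walk

/-- The list of edges of a walk. -/
def edges {G : Multigraph V E} : {u v : V} → G.Walk u v → List E
  | _, _, .nil _ => []
  | _, _, .cons e _ p => e :: edges p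

/-- The list of vertices visited by a walk. -/
def support {G : Multigraph V E} : {u v : V} → G.Walk u v → List V
  | _, v, .nil _ => [v]
  | u, _, .cons _ _ p => u :: support p

/-- A walk is a path if it visits no vertex twice. -/
def IsPath {G : Multigraph V E} {u v : V} (p : G.Walk u v) : Prop :=
  p.support.Nodup

/-- A closed walk is a cycle if it is nonempty, repeats no edge, and visits no
vertex twice (except for the common start/end). -/
def IsCycle {G : Multigraph V E} {v : V} (p : G.Walk v v) : Prop :=
  p.edges ≠ [] ∧ p.edges.Nodup ∧ p.support.tail.Nodup

end Walk

/-- The list of edges `l` is alternately colored `α, β, α, β, …` by `c`. -/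
def AltColors (c : E → ℕ) (α β : ℕ) (l : List E) : Prop :=
  ∀ i : Fin l.length, c (l.get i) = if (i : ℕ) % 2 = 0 then α else β

/-- The `α`-`β`-alternating walk `p` (w.r.t. the coloring `c` of the subgraph
with edge set `S`) is maximal: it cannot be extended at its endpoint. -/
def MaximalAlt (G : Multigraph V E) (S : Set E) (c : E → ℕ) (α β : ℕ)
    {v w : V} (p : G.Walk v w) : Prop :=
  ∀ f ∈ S, f ∉ p.edges → w ∈ G.inc f →
    c f ≠ (if p.edges.length % 2 = 0 then α else β)

/-- `C` is the edge set of the odd cycle `C^e_{α,β}`: the uncolored edge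
`e = (u,v)` (with `α` missing at `u` and `β` missing at `v`) together with the
`α`-`β`-alternating path joining `v` to `u` inside the colored subgraph `S`. -/
def IsKempeCycle (G : Multigraph V E) [Fintype V] (S : Set E) (c : E → ℕ)
    (e : E) (α β : ℕ) (C : Set E) : Prop :=
  α < G.maxDeg ∧ β < G.maxDeg ∧
    ∃ (u v : V) (p : G.Walk v u),
      G.inc e = s(u, v) ∧ G.MissingAt S c α u ∧ G.MissingAt S c β v ∧
      p.IsPath ∧ (∀ f ∈ p.edges, f ∈ S) ∧ AltColors c α β p.edges ∧
      C = insert e {f | f ∈ p.edges}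

end Multigraph
namespace Multigraph

open scoped Classical

set_option maxHeartbeats 1000000
set_option linter.unusedSectionVars false
set_option linter.unusedVariables false

variable {V E : Type} [Fintype V] [Fintype E] {G : Multigraph V E} {S : Set E} {c : E → ℕ} {n : ℕ}

lemma ProperOn.unique (hc : G.ProperOn S c n) {g g' : E} (hg : g ∈ S) (hg' : g' ∈ S)
    (hne : g ≠ g') {z : V} (hz : z ∈ G.inc g) (hz' : z ∈ G.inc g') : c g ≠ c g' :=
  hc.2 g hg g' hg' hne ⟨z, hz, hz'⟩

lemma ProperOn.mono {T : Set E} (hc : G.ProperOn S c n) (hT : T ⊆ S) : G.ProperOn T c n :=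
  ⟨fun e he => hc.1 e (hT he), fun e he f hf => hc.2 e (hT he) f (hT hf)⟩

lemma MissingAt.mono {α : ℕ} {z : V} {T : Set E} (h : G.MissingAt S c α z) (hT : T ⊆ S) :
    G.MissingAt T c α z := fun e he => h e (hT he)

lemma exists_endpoints (G : Multigraph V E) (e : E) : ∃ u v : V, u ≠ v ∧ G.inc e = s(u, v) := by
  obtain ⟨⟨u, v⟩, h⟩ := Quot.exists_rep (G.inc e)
  have h' : G.inc e = s(u, v) := h.symm
  refine ⟨u, v, fun huv => G.loopless e ?_, h'⟩
  rw [h', huv]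
  exact Sym2.mk_isDiag_iff.2 rfl

/-- colored edges at `z` -/
private noncomputable def colSet (G : Multigraph V E) (S : Set E) (z : V) : Finset E :=
  ({g | g ∈ S ∧ z ∈ G.inc g}).toFinite.toFinset

/-- uncolored edges at `z` -/
private noncomputable def uncSet (G : Multigraph V E) (S : Set E) (z : V) : Finset E :=
  ({g | g ∉ S ∧ z ∈ G.inc g}).toFinite.toFinset

/-- missing colors at `z` -/
private noncomputable def missSet (G : Multigraph V E) (S : Set E) (c : E → ℕ) (n : ℕ) (z : V) :
    Finset ℕ :=
  (Finset.range n).filter (fun ρ => G.MissingAt S c ρ z)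

private lemma mem_colSet {z : V} {g : E} : g ∈ colSet G S z ↔ g ∈ S ∧ z ∈ G.inc g := by
  simp [colSet]

private lemma mem_uncSet {z : V} {g : E} : g ∈ uncSet G S z ↔ g ∉ S ∧ z ∈ G.inc g := by
  simp [uncSet]

private lemma mem_missSet {z : V} {ρ : ℕ} :
    ρ ∈ missSet G S c n z ↔ ρ < n ∧ G.MissingAt S c ρ z := by
  simp [missSet, Finset.mem_filter, and_comm]

lemma deg_eq (z : V) : G.deg z = ({g | z ∈ G.inc g}).toFinite.toFinset.card := by
  rw [deg, degOn, show {e | e ∈ Set.univ ∧ z ∈ G.inc e} = {g | z ∈ G.inc g} by ext g; simp]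
  exact Set.ncard_eq_toFinset_card _ _

lemma deg_le_maxDeg (z : V) : G.deg z ≤ G.maxDeg := Finset.le_sup (Finset.mem_univ z)

lemma card_uncSet_le (hc : G.ProperOn S c n) (z : V) (hn : G.deg z ≤ n) :
    (uncSet G S z).card ≤ (missSet G S c n z).card := by
  have himg : (colSet G S z).image c ⊆ Finset.range n := by
    intro ρ hρ
    obtain ⟨g, hg, rfl⟩ := Finset.mem_image.1 hρ
    rw [mem_colSet] at hg
    exact Finset.mem_range.2 (hc.1 g hg.1)
  have hinj : Set.InjOn c (colSet G S z) := by
    intro g hg g' hg' hcc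
    by_contra hne
    rw [Finset.mem_coe, mem_colSet] at hg hg'
    exact hc.unique hg.1 hg'.1 hne hg.2 hg'.2 hcc
  have hcard : ((colSet G S z).image c).card = (colSet G S z).card :=
    Finset.card_image_of_injOn hinj
  have hmiss : missSet G S c n z = Finset.range n \ (colSet G S z).image c := by
    ext ρ
    rw [mem_missSet]
    simp only [Finset.mem_sdiff, Finset.mem_image, Finset.mem_range, MissingAt]
    constructor
    · rintro ⟨h1, h2⟩
      exact ⟨h1, by rintro ⟨g, hg, rfl⟩; rw [mem_colSet] at hg; exact h2 g hg.1 hg.2 rfl⟩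
    · rintro ⟨h1, h2⟩
      exact ⟨h1, fun g hg hzg hcg => h2 ⟨g, mem_colSet.2 ⟨hg, hzg⟩, hcg⟩⟩
  have hdisj : Disjoint (colSet G S z) (uncSet G S z) := by
    rw [Finset.disjoint_left]
    intro g hg hg'
    rw [mem_colSet] at hg
    rw [mem_uncSet] at hg'
    exact hg'.1 hg.1
  have hsub : colSet G S z ∪ uncSet G S z ⊆ ({g | z ∈ G.inc g}).toFinite.toFinset := by
    intro g hg
    rw [Set.Finite.mem_toFinset, Set.mem_setOf_eq]
    rcases Finset.mem_union.1 hg with h | h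
    · exact (mem_colSet.1 h).2
    · exact (mem_uncSet.1 h).2
  have h1 : (colSet G S z).card + (uncSet G S z).card ≤ n := by
    have h2 := Finset.card_le_card hsub
    rw [Finset.card_union_of_disjoint hdisj] at h2
    rw [deg_eq] at hn
    omega
  have h2 : (colSet G S z).card ≤ n := by
    have := Finset.card_le_card himg
    simp only [Finset.card_range] at this
    omega
  have h3 : (missSet G S c n z).card = n - (colSet G S z).card := by
    rw [hmiss, Finset.card_sdiff_of_subset himg, Finset.card_range, hcard]
  omega

lemma exists_missing (hc : G.ProperOn S c G.maxDeg) {e : E} {z : V}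
    (he : e ∉ S) (hz : z ∈ G.inc e) :
    ∃ ρ, ρ < G.maxDeg ∧ G.MissingAt S c ρ z := by
  have h1 : e ∈ uncSet G S z := mem_uncSet.2 ⟨he, hz⟩
  have h2 := card_uncSet_le hc z (deg_le_maxDeg z)
  have h3 : 0 < (missSet G S c G.maxDeg z).card := by
    have := Finset.card_pos.2 ⟨e, h1⟩
    omega
  obtain ⟨ρ, hρ⟩ := Finset.card_pos.1 h3
  exact ⟨ρ, mem_missSet.1 hρ⟩

lemma ProperOn.insertEdge (hc : G.ProperOn S c n) {e : E} {u v : V} (he : e ∉ S)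
    (hinc : G.inc e = s(u, v)) {ρ : ℕ}
    (hρ : ρ < n) (hu : G.MissingAt S c ρ u) (hv : G.MissingAt S c ρ v) :
    G.ProperOn (insert e S) (Function.update c e ρ) n := by
  have key : ∀ g ∈ S, (∃ z : V, z ∈ G.inc e ∧ z ∈ G.inc g) → c g ≠ ρ := by
    rintro g hg ⟨z, hze, hzg⟩
    rw [hinc, Sym2.mem_iff] at hze
    rcases hze with rfl | rfl
    · exact hu g hg hzg
    · exact hv g hg hzg
  have hmem : ∀ g, g ∈ insert e S → g ≠ e → g ∈ S := by
    intro g hg hne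
    rcases Set.mem_insert_iff.1 hg with h | h
    · exact absurd h hne
    · exact h
  constructor
  · intro g hg
    rcases eq_or_ne g e with rfl | hne
    · simpa using hρ
    · rw [Function.update_of_ne hne]
      exact hc.1 g (hmem g hg hne)
  · intro g hg g' hg' hne hsh
    rcases eq_or_ne g e with hge | hge
    · have hg'S : g' ∈ S := hmem g' hg' (fun h => hne (hge.trans h.symm))
      have hg'e : g' ≠ e := fun h => he (h ▸ hg'S)
      rw [hge, Function.update_self, Function.update_of_ne hg'e]
      intro h
      refine key g' hg'S ?_ h.symm
      obtain ⟨z, hz1, hz2⟩ := hsh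
      exact ⟨z, hge ▸ hz1, hz2⟩
    · have hgS : g ∈ S := hmem g hg hge
      rcases eq_or_ne g' e with hg'e | hg'e
      · rw [hg'e, Function.update_self, Function.update_of_ne hge]
        obtain ⟨z, hz1, hz2⟩ := hsh
        exact fun h => key g hgS ⟨z, hg'e ▸ hz2, hz1⟩ h
      · rw [Function.update_of_ne hge, Function.update_of_ne hg'e]
        exact hc.2 g hgS g' (hmem g' hg' hg'e) hne hsh

lemma MissingAt.insertEdge {σ ρ : ℕ} {e : E} {z : V} (h : G.MissingAt S c σ z) (hρσ : ρ ≠ σ) :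
    G.MissingAt (insert e S) (Function.update c e ρ) σ z := by
  intro g hg hzg
  rcases eq_or_ne g e with rfl | hne
  · simpa using hρσ
  · rw [Function.update_of_ne hne]
    rcases Set.mem_insert_iff.1 hg with h' | h'
    · exact absurd h' hne
    · exact h g h' hzg

lemma card_contra (hS : G.IsMaxColorable S) {T : Set E} (hT : G.ColorableOn T G.maxDeg)
    (h : S.ncard < T.ncard) : False := by
  have := hS.2 T hT
  omega

lemma no_common_missing (hS : G.IsMaxColorable S) (hc : G.ProperOn S c G.maxDeg) {e : E} {u v : V}
    {ρ : ℕ} (he : e ∉ S) (hinc : G.inc e = s(u, v)) (hρ : ρ < G.maxDeg)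
    (hu : G.MissingAt S c ρ u) (hv : G.MissingAt S c ρ v) : False := by
  refine card_contra hS ⟨_, hc.insertEdge he hinc hρ hu hv⟩ ?_
  rw [Set.ncard_insert_of_notMem he S.toFinite]
  omega

end Multigraph
namespace Multigraph

open scoped Classical

set_option maxHeartbeats 1000000
set_option linter.unusedSectionVars false
set_option linter.unusedVariables false

variable {V E : Type} [Fintype V] [Fintype E] {G : Multigraph V E} {S : Set E} {c : E → ℕ} {n : ℕ}

lemma getElem?_some' {α : Type*} {l : List α} {i : ℕ} {a : α} (h : l[i]? = some a)
    (hi : i < l.length) : l[i] = a := by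
  rw [List.getElem?_eq_getElem hi] at h
  exact Option.some_injective _ h

/-- greedily build a maximal alternating trail -/
noncomputable def build (G : Multigraph V E) (S : Set E) (c : E → ℕ) :
    ℕ → ℕ → ℕ → V → Set E → List E × List V
  | 0, _, _, w, _ => ([], [w])
  | (m+1), γ, δ, w, used =>
    if h : ∃ g, g ∈ S ∧ g ∉ used ∧ w ∈ G.inc g ∧ c g = γ then
      (h.choose :: (build G S c m δ γ (Sym2.Mem.other h.choose_spec.2.2.1)
          (insert h.choose used)).1,
        w :: (build G S c m δ γ (Sym2.Mem.other h.choose_spec.2.2.1) (insert h.choose used)).2)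
    else ([], [w])

structure BuildSpec (G : Multigraph V E) (S : Set E) (c : E → ℕ) (γ δ : ℕ) (w : V)
    (used : Set E) (L : List E) (sup : List V) : Prop where
  hlen : sup.length = L.length + 1
  hhead : sup[0]? = some w
  hinc : ∀ i (hi : i < L.length) (h1 : i < sup.length) (h2 : i + 1 < sup.length),
    G.inc L[i] = s(sup[i], sup[i+1])
  halt : ∀ i (hi : i < L.length), c L[i] = if i % 2 = 0 then γ else δ
  hmem : ∀ g ∈ L, g ∈ S ∧ g ∉ used
  hnd : L.Nodup

lemma build_spec : ∀ (m : ℕ) (γ δ : ℕ) (w : V) (used : Set E),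
    BuildSpec G S c γ δ w used (build G S c m γ δ w used).1 (build G S c m γ δ w used).2 := by
  intro m
  induction m with
  | zero =>
    intro γ δ w used
    rw [show build G S c 0 γ δ w used = ([], [w]) from rfl]
    exact ⟨rfl, rfl, fun i hi => by simp at hi, fun i hi => by simp at hi,
      fun g hg => by simp at hg, by simp⟩
  | succ m ih =>
    intro γ δ w used
    rw [build]
    split
    case isFalse h =>
      exact ⟨rfl, rfl, fun i hi => by simp at hi, fun i hi => by simp at hi,
        fun g hg => by simp at hg, by simp⟩
    case isTrue h =>
      have hg := h.choose_spec
      set g₀ := h.choose with hg₀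
      set p := build G S c m δ γ (Sym2.Mem.other hg.2.2.1) (insert g₀ used) with hp
      have spec := ih δ γ (Sym2.Mem.other hg.2.2.1) (insert g₀ used)
      rw [← hp] at spec
      constructor
      · simpa using spec.hlen
      · simp
      · intro i hi h1 h2
        match i with
        | 0 =>
          simp only [List.getElem_cons_zero, List.getElem_cons_succ]
          have hl : 0 < p.2.length := by rw [spec.hlen]; omega
          have h0 : p.2[0] = Sym2.Mem.other hg.2.2.1 := getElem?_some' spec.hhead hl
          rw [h0]
          exact (Sym2.other_spec hg.2.2.1).symm
        | (i+1) =>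
          simp only [List.getElem_cons_succ]
          have hi' : i < p.1.length := by simpa using hi
          exact spec.hinc i hi' (by rw [spec.hlen]; omega) (by rw [spec.hlen]; omega)
      · intro i hi
        match i with
        | 0 => simpa using hg.2.2.2
        | (i+1) =>
          simp only [List.getElem_cons_succ]
          rw [spec.halt i (by simpa using hi)]
          rcases Nat.even_or_odd i with he | ho
          · have h1 : i % 2 = 0 := Nat.even_iff.1 he
            have h2 : (i+1) % 2 = 1 := by omega
            simp [h1, h2]
          · have h1 : i % 2 = 1 := Nat.odd_iff.1 ho
            have h2 : (i+1) % 2 = 0 := by omega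
            simp [h1, h2]
      · intro g hgm
        rcases List.mem_cons.1 hgm with rfl | hgm
        · exact ⟨hg.1, hg.2.1⟩
        · have := spec.hmem g hgm
          exact ⟨this.1, fun hu => this.2 (Set.mem_insert_iff.2 (Or.inr hu))⟩
      · refine List.nodup_cons.2 ⟨fun hmem => ?_, spec.hnd⟩
        exact (spec.hmem g₀ hmem).2 (Set.mem_insert _ _)

lemma build_stop : ∀ (m : ℕ) (γ δ : ℕ) (w : V) (used : Set E),
    {g | g ∉ used}.ncard ≤ m →
    ∀ g ∈ S, g ∉ used → g ∉ (build G S c m γ δ w used).1 →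
    ∀ w' : V, (build G S c m γ δ w used).2.getLast? = some w' → w' ∈ G.inc g →
    c g ≠ if (build G S c m γ δ w used).1.length % 2 = 0 then γ else δ := by
  intro m
  induction m with
  | zero =>
    intro γ δ w used hcard g hgS hgu
    exfalso
    have hmm : g ∈ ({g | g ∉ used} : Set E) := hgu
    have h0 : ({g | g ∉ used} : Set E).ncard = 0 := le_antisymm hcard (Nat.zero_le _)
    rw [Set.ncard_eq_zero (Set.toFinite _)] at h0
    rw [h0] at hmm
    exact hmm
  | succ m ih =>
    intro γ δ w used hcard g hgS hgu
    rw [build]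
    split
    case isFalse h =>
      intro hgL w' hw' hwg
      simp only [List.getLast?_singleton, Option.some.injEq] at hw'
      subst hw'
      simp only [List.length_nil, Nat.zero_mod, if_pos rfl]
      exact fun hcg => h ⟨g, hgS, hgu, hwg, hcg⟩
    case isTrue h =>
      have hg := h.choose_spec
      set g₀ := h.choose with hg₀
      set p := build G S c m δ γ (Sym2.Mem.other hg.2.2.1) (insert g₀ used) with hp
      intro hgL w' hw' hwg
      have hgne : g ≠ g₀ := fun hh => hgL (hh ▸ List.mem_cons_self)
      have hgp : g ∉ p.1 := fun hh => hgL (List.mem_cons.2 (Or.inr hh))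
      have hcard' : {g | g ∉ insert g₀ used}.ncard ≤ m := by
        have hset : ({g | g ∉ used} : Set E) = insert g₀ {g | g ∉ insert g₀ used} := by
          ext g'
          by_cases hgg : g' = g₀ <;> simp [hgg, hg.2.1]
        have hg₀nm : g₀ ∉ ({g | g ∉ insert g₀ used} : Set E) := by simp
        rw [hset, Set.ncard_insert_of_notMem hg₀nm (Set.toFinite _)] at hcard
        omega
      have hlen := (build_spec (G := G) (S := S) (c := c) m δ γ
        (Sym2.Mem.other hg.2.2.1) (insert g₀ used)).hlen
      rw [← hp] at hlen
      have hne : p.2 ≠ [] := by intro hh; rw [hh] at hlen; simp at hlen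
      obtain ⟨x, xs, hxx⟩ := List.exists_cons_of_ne_nil hne
      have hlast : p.2.getLast? = some w' := by
        rw [hxx] at hw' ⊢
        rw [List.getLast?_cons_cons] at hw'
        exact hw'
      have hres := ih δ γ (Sym2.Mem.other hg.2.2.1) (insert g₀ used) hcard' g hgS
        (fun hh => by rcases Set.mem_insert_iff.1 hh with h1 | h1; exact hgne h1; exact hgu h1)
        hgp w' hlast hwg
      rw [← hp] at hres
      simp only [List.length_cons]
      rcases Nat.even_or_odd p.1.length with he | ho
      · have h1 : p.1.length % 2 = 0 := Nat.even_iff.1 he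
        have h2 : (p.1.length + 1) % 2 = 1 := by omega
        simp only [h2, one_ne_zero, if_false]
        simpa [h1] using hres
      · have h1 : p.1.length % 2 = 1 := Nat.odd_iff.1 ho
        have h2 : (p.1.length + 1) % 2 = 0 := by omega
        simp only [h2, if_pos rfl]
        simpa [h1] using hres

end Multigraph
namespace Multigraph

open scoped Classical

set_option maxHeartbeats 1000000
set_option linter.unusedSectionVars false
set_option linter.unusedVariables false

variable {V E : Type} [Fintype V] [Fintype E] {G : Multigraph V E} {S : Set E} {c : E → ℕ} {n : ℕ}

/-- an `α`-`β`-alternating path from `v` to `u`, maximal in the sense that it carries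
all the data we need -/
structure AltPath (G : Multigraph V E) (S : Set E) (c : E → ℕ) (n : ℕ) (α β : ℕ) (u v : V)
    (L : List E) (sup : List V) : Prop where
  hlen : sup.length = L.length + 1
  hne : L ≠ []
  hv : sup[0]? = some v
  hu : sup[L.length]? = some u
  hnd : sup.Nodup
  hinc : ∀ i (hi : i < L.length) (h1 : i < sup.length) (h2 : i + 1 < sup.length),
    G.inc L[i] = s(sup[i], sup[i+1])
  hmem : ∀ g ∈ L, g ∈ S
  halt : ∀ i (hi : i < L.length), c L[i] = if i % 2 = 0 then α else β
  hmu : G.MissingAt S c α u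
  hmv : G.MissingAt S c β v
  hαn : α < n
  hβn : β < n
  hαβ : α ≠ β

namespace AltPath

variable {α β : ℕ} {u v : V} {L : List E} {sup : List V}

lemma pos_len (ap : AltPath G S c n α β u v L sup) : 0 < L.length :=
  List.length_pos_iff.2 ap.hne

lemma sup0 (ap : AltPath G S c n α β u v L sup) (h0 : 0 < sup.length) : sup[0] = v :=
  getElem?_some' ap.hv h0

lemma supLast (ap : AltPath G S c n α β u v L sup) (h0 : L.length < sup.length) :
    sup[L.length] = u :=
  getElem?_some' ap.hu h0

lemma sup_inj (ap : AltPath G S c n α β u v L sup) {i j : ℕ} (hi : i < sup.length)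
    (hj : j < sup.length) (h : sup[i] = sup[j]) : i = j :=
  (List.Nodup.getElem_inj_iff ap.hnd).1 h

lemma nodupL (ap : AltPath G S c n α β u v L sup) : L.Nodup := by
  rw [List.nodup_iff_injective_get]
  rintro ⟨i, hi⟩ ⟨j, hj⟩ hij
  simp only [List.get_eq_getElem] at hij
  have h1 : i < sup.length := by rw [ap.hlen]; omega
  have h2 : i + 1 < sup.length := by rw [ap.hlen]; omega
  have h3 : j < sup.length := by rw [ap.hlen]; omega
  have h4 : j + 1 < sup.length := by rw [ap.hlen]; omega
  have he : s(sup[i], sup[i+1]) = s(sup[j], sup[j+1]) := by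
    rw [← ap.hinc i hi h1 h2, ← ap.hinc j hj h3 h4, hij]
  rw [Sym2.eq_iff] at he
  ext
  rcases he with ⟨ha, hb⟩ | ⟨ha, hb⟩
  · exact ap.sup_inj h1 h3 ha
  · have := ap.sup_inj h1 h4 ha
    have := ap.sup_inj h2 h3 hb
    omega

lemma vertex_cases (ap : AltPath G S c n α β u v L sup) {i : ℕ} (hi : i < L.length) {z : V}
    (hz : z ∈ G.inc L[i]) :
    ∃ (h2 : i + 1 < sup.length), z = sup[i]'(by omega) ∨ z = sup[i+1] := by
  have h1 : i < sup.length := by rw [ap.hlen]; omega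
  have h2 : i + 1 < sup.length := by rw [ap.hlen]; omega
  rw [ap.hinc i hi h1 h2, Sym2.mem_iff] at hz
  exact ⟨h2, hz⟩

lemma mem_getElem (ap : AltPath G S c n α β u v L sup) {g : E} (hg : g ∈ L) :
    ∃ (i : ℕ) (hi : i < L.length), L[i] = g := by
  simpa using List.mem_iff_getElem.1 hg

lemma getElem_mem_inc_left (ap : AltPath G S c n α β u v L sup) {i : ℕ} (hi : i < L.length)
    (h1 : i < sup.length) : sup[i] ∈ G.inc L[i] := by
  rw [ap.hinc i hi h1 (by rw [ap.hlen]; omega)]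
  exact Sym2.mem_mk_left _ _

lemma getElem_mem_inc_right (ap : AltPath G S c n α β u v L sup) {i : ℕ} (hi : i < L.length)
    (h2 : i + 1 < sup.length) : sup[i+1] ∈ G.inc L[i] := by
  rw [ap.hinc i hi (by rw [ap.hlen]; omega) h2]
  exact Sym2.mem_mk_right _ _

lemma len_even (ap : AltPath G S c n α β u v L sup) : L.length % 2 = 0 := by
  have hpos := ap.pos_len
  by_contra hodd
  have hl : L.length - 1 < L.length := by omega
  have hpar : (L.length - 1) % 2 = 0 := by omega
  have hcol : c L[L.length - 1] = α := by rw [ap.halt _ hl, if_pos hpar]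
  have hu' : (sup[L.length]'(by rw [ap.hlen]; omega)) ∈ G.inc L[L.length - 1] := by
    have h5 := ap.getElem_mem_inc_right (i := L.length - 1) hl (by rw [ap.hlen]; omega)
    have heq : (sup[L.length - 1 + 1]'(by rw [ap.hlen]; omega))
        = sup[L.length]'(by rw [ap.hlen]; omega) := by congr 1; omega
    rwa [heq] at h5
  rw [ap.supLast (by rw [ap.hlen]; omega)] at hu'
  exact ap.hmu _ (ap.hmem _ (List.getElem_mem _)) hu' hcol

/-- an interior vertex of the path is incident with edges of both colors -/
lemma interior_edge (ap : AltPath G S c n α β u v L sup) {k : ℕ} (h0 : 0 < k)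
    (hk : k < L.length) (ρ : ℕ) (hρ : ρ = α ∨ ρ = β) :
    ∃ g ∈ L, (sup[k]'(by rw [ap.hlen]; omega)) ∈ G.inc g ∧ c g = ρ := by
  have hk1 : k - 1 < L.length := by omega
  have hin1 : (sup[k]'(by rw [ap.hlen]; omega)) ∈ G.inc L[k-1] := by
    have h5 := ap.getElem_mem_inc_right (i := k - 1) hk1 (by rw [ap.hlen]; omega)
    have heq : (sup[k - 1 + 1]'(by rw [ap.hlen]; omega)) = sup[k]'(by rw [ap.hlen]; omega) := by
      congr 1; omega
    rwa [heq] at h5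
  have hin2 : (sup[k]'(by rw [ap.hlen]; omega)) ∈ G.inc L[k] :=
    ap.getElem_mem_inc_left hk (by rw [ap.hlen]; omega)
  have hc1 := ap.halt (k-1) hk1
  have hc2 := ap.halt k hk
  rcases Nat.even_or_odd k with hev | hod
  · have e1 : k % 2 = 0 := Nat.even_iff.1 hev
    have e2 : (k - 1) % 2 = 1 := by omega
    rcases hρ with rfl | rfl
    · exact ⟨L[k], List.getElem_mem _, hin2, by rw [hc2, if_pos e1]⟩
    · exact ⟨L[k-1], List.getElem_mem _, hin1, by rw [hc1, e2]; simp⟩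
  · have e1 : k % 2 = 1 := Nat.odd_iff.1 hod
    have e2 : (k - 1) % 2 = 0 := by omega
    rcases hρ with rfl | rfl
    · exact ⟨L[k-1], List.getElem_mem _, hin1, by rw [hc1, if_pos e2]⟩
    · exact ⟨L[k], List.getElem_mem _, hin2, by rw [hc2, e1]; simp⟩

lemma interior_not_missing (ap : AltPath G S c n α β u v L sup) {k : ℕ} (h0 : 0 < k)
    (hk : k < L.length) (ρ : ℕ) (hρ : ρ = α ∨ ρ = β) :
    ¬ G.MissingAt S c ρ (sup[k]'(by rw [ap.hlen]; omega)) := by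
  intro hmiss
  obtain ⟨g, hgL, hginc, hgc⟩ := ap.interior_edge h0 hk ρ hρ
  exact hmiss g (ap.hmem g hgL) hginc hgc

/-- every edge of `S` of one of the two colors incident with a vertex of the path
belongs to the path -/
lemma closure (hc : G.ProperOn S c n) (ap : AltPath G S c n α β u v L sup) {g : E} (hgS : g ∈ S)
    {k : ℕ} (hk : k < sup.length) (hz : sup[k] ∈ G.inc g) (hcg : c g = α ∨ c g = β) : g ∈ L := by
  by_contra hgL
  have hkk : k ≤ L.length := by rw [ap.hlen] at hk; omega
  rcases Nat.eq_zero_or_pos k with rfl | hkpos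
  · rw [ap.sup0 (by omega)] at hz
    rcases hcg with hcg | hcg
    · have h0 : 0 < L.length := ap.pos_len
      have hL0 : c L[0] = α := by rw [ap.halt 0 h0]; simp
      have hvin : v ∈ G.inc L[0] := by
        have := ap.getElem_mem_inc_left h0 (by rw [ap.hlen]; omega)
        rwa [ap.sup0 (by rw [ap.hlen]; omega)] at this
      exact hc.unique hgS (ap.hmem _ (List.getElem_mem _))
        (fun hh => hgL (hh ▸ List.getElem_mem _)) hz hvin (by rw [hcg, hL0])
    · exact ap.hmv g hgS hz hcg
  · rcases Nat.lt_or_ge k L.length with hlt | hge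
    · obtain ⟨g', hg'L, hg'inc, hg'c⟩ := ap.interior_edge hkpos hlt (c g) (hcg.imp id id)
      have hne : g ≠ g' := fun hh => hgL (hh ▸ hg'L)
      exact hc.unique hgS (ap.hmem _ hg'L) hne hz hg'inc hg'c.symm
    · have hkeq : k = L.length := by omega
      subst hkeq
      rw [ap.supLast hk] at hz
      rcases hcg with hcg | hcg
      · exact ap.hmu g hgS hz hcg
      · have hev := ap.len_even
        have hpos := ap.pos_len
        have hl : L.length - 1 < L.length := by omega
        have hpar : (L.length - 1) % 2 = 1 := by omega
        have hcol : c L[L.length - 1] = β := by rw [ap.halt _ hl, hpar]; simp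
        have huin : u ∈ G.inc L[L.length-1] := by
          have h5 := ap.getElem_mem_inc_right (i := L.length - 1) hl (by rw [ap.hlen]; omega)
          have heq : (sup[L.length - 1 + 1]'(by rw [ap.hlen]; omega))
              = sup[L.length]'(by rw [ap.hlen]; omega) := by congr 1; omega
          rw [heq] at h5
          rwa [ap.supLast (by rw [ap.hlen]; omega)] at h5
        exact hc.unique hgS (ap.hmem _ (List.getElem_mem _))
          (fun hh => hgL (hh ▸ List.getElem_mem _)) hz huin (by rw [hcg, hcol])

lemma mem_sup_of_inc (ap : AltPath G S c n α β u v L sup) {g : E} (hg : g ∈ L) {z : V}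
    (hz : z ∈ G.inc g) : ∃ (k : ℕ) (hk : k < sup.length), sup[k] = z := by
  obtain ⟨i, hi, rfl⟩ := ap.mem_getElem hg
  obtain ⟨h2, hz'⟩ := ap.vertex_cases hi hz
  rcases hz' with h | h
  · exact ⟨i, by omega, h.symm⟩
  · exact ⟨i+1, h2, h.symm⟩

end AltPath

/-- an alternating trail starting at a vertex missing the second color is a path. -/
lemma support_nodup_of_alt {α β : ℕ} {v : V} {L : List E} {sup : List V}
    (hc : G.ProperOn S c n) {u_ : V}
    (hlen : sup.length = L.length + 1) (hv : sup[0]? = some v)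
    (hinc : ∀ i (hi : i < L.length) (h1 : i < sup.length) (h2 : i + 1 < sup.length),
      G.inc L[i] = s(sup[i], sup[i+1]))
    (halt : ∀ i (hi : i < L.length), c L[i] = if i % 2 = 0 then α else β)
    (hmem : ∀ g ∈ L, g ∈ S) (hnd : L.Nodup)
    (hmv : G.MissingAt S c β v) (hαβ : α ≠ β) (hu_ : True) : sup.Nodup := by
  have key : ∀ j k (hj : j < sup.length) (hk : k < sup.length), j < k → sup[j] = sup[k] → False := by
    intro j k hj hk hjk heq
    have hkL : k ≤ L.length := by omega
    have hk1 : k - 1 < L.length := by omega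
    -- k = j + 1 is impossible by looplessness
    have hk2 : j + 2 ≤ k := by
      rcases Nat.lt_or_ge (j+1) k with h | h
      · omega
      · have hkj : k = j + 1 := by omega
        subst hkj
        exfalso
        have hjL : j < L.length := by omega
        have hd := G.loopless L[j]
        rw [hinc j hjL (by omega) (by omega), ← heq] at hd
        exact hd (Sym2.mk_isDiag_iff.2 rfl)
    -- the edge L[k-1] is incident with sup[j]
    have hzin : sup[j] ∈ G.inc L[k-1] := by
      rw [hinc (k-1) hk1 (by omega) (by omega), heq]
      have heq2 : (sup[k - 1 + 1]'(by omega)) = sup[k] := by congr 1; omega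
      rw [← heq2]
      exact Sym2.mem_mk_right _ _
    rcases Nat.eq_zero_or_pos j with rfl | hjpos
    · -- sup[j] = v
      have hveq : sup[0]'(by omega) = v := getElem?_some' hv (by omega)
      rcases Nat.even_or_odd (k-1) with hev | hod
      · -- color α : conflicts with L[0]
        have hcol : c L[k-1] = α := by rw [halt _ hk1, if_pos (Nat.even_iff.1 hev)]
        have h0L : 0 < L.length := by omega
        have hL0 : c L[0] = α := by rw [halt 0 h0L]; simp
        have hv0 : sup[0]'(by omega) ∈ G.inc L[0] := by
          rw [hinc 0 h0L (by omega) (by omega)]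
          exact Sym2.mem_mk_left _ _
        have hne : L[k-1] ≠ L[0] := by
          intro hh
          have := (List.Nodup.getElem_inj_iff hnd).1 hh
          omega
        exact hc.unique (hmem _ (List.getElem_mem _)) (hmem _ (List.getElem_mem _)) hne
          hzin hv0 (by rw [hcol, hL0])
      · -- color β : missing at v
        have hcol : c L[k-1] = β := by rw [halt _ hk1, Nat.odd_iff.1 hod]; simp
        rw [hveq] at hzin
        exact hmv _ (hmem _ (List.getElem_mem _)) hzin hcol
    · -- interior j : edges L[j-1], L[j] of both colors at sup[j]
      have hjL : j < L.length := by omega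
      have hj1 : j - 1 < L.length := by omega
      have hin1 : sup[j] ∈ G.inc L[j-1] := by
        rw [hinc (j-1) hj1 (by omega) (by omega)]
        have heq2 : (sup[j - 1 + 1]'(by omega)) = sup[j] := by congr 1; omega
        rw [← heq2]
        exact Sym2.mem_mk_right _ _
      have hin2 : sup[j] ∈ G.inc L[j] := by
        rw [hinc j hjL (by omega) (by omega)]
        exact Sym2.mem_mk_left _ _
      have hne1 : L[k-1] ≠ L[j-1] := by
        intro hh; have := (List.Nodup.getElem_inj_iff hnd).1 hh; omega
      have hne2 : L[k-1] ≠ L[j] := by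
        intro hh; have := (List.Nodup.getElem_inj_iff hnd).1 hh; omega
      rcases Nat.even_or_odd (k-1) with hev | hod
      · have hcol : c L[k-1] = α := by rw [halt _ hk1, if_pos (Nat.even_iff.1 hev)]
        rcases Nat.even_or_odd j with hev' | hod'
        · have hcol2 : c L[j] = α := by rw [halt _ hjL, if_pos (Nat.even_iff.1 hev')]
          exact hc.unique (hmem _ (List.getElem_mem _)) (hmem _ (List.getElem_mem _)) hne2
            hzin hin2 (by rw [hcol, hcol2])
        · have hcol2 : c L[j-1] = α := by
            rw [halt _ hj1, if_pos (by have := Nat.odd_iff.1 hod'; omega)]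
          exact hc.unique (hmem _ (List.getElem_mem _)) (hmem _ (List.getElem_mem _)) hne1
            hzin hin1 (by rw [hcol, hcol2])
      · have hcol : c L[k-1] = β := by rw [halt _ hk1, Nat.odd_iff.1 hod]; simp
        rcases Nat.even_or_odd j with hev' | hod'
        · have hcol2 : c L[j-1] = β := by
            rw [halt _ hj1, show (j-1) % 2 = 1 by have := Nat.even_iff.1 hev'; omega]
            simp
          exact hc.unique (hmem _ (List.getElem_mem _)) (hmem _ (List.getElem_mem _)) hne1
            hzin hin1 (by rw [hcol, hcol2])
        · have hcol2 : c L[j] = β := by rw [halt _ hjL, Nat.odd_iff.1 hod']; simp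
          exact hc.unique (hmem _ (List.getElem_mem _)) (hmem _ (List.getElem_mem _)) hne2
            hzin hin2 (by rw [hcol, hcol2])
  rw [List.nodup_iff_injective_get]
  rintro ⟨i, hi⟩ ⟨j, hj⟩ hij
  simp only [List.get_eq_getElem] at hij
  by_contra hne
  have hne' : i ≠ j := fun hh => hne (by simp [hh])
  rcases Nat.lt_or_ge i j with h | h
  · exact key i j hi hj h hij
  · exact key j i hj hi (by omega) hij.symm

end Multigraph
namespace Multigraph

open scoped Classical

set_option maxHeartbeats 1000000
set_option linter.unusedSectionVars false
set_option linter.unusedVariables false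

variable {V E : Type} [Fintype V] [Fintype E] {G : Multigraph V E} {S T : Set E} {c : E → ℕ}
  {n : ℕ} {γ δ : ℕ} {L : List E} {sup : List V}

/-- swap the colors `γ`, `δ` on the edges of `L` -/
noncomputable def swOn (c : E → ℕ) (γ δ : ℕ) (L : List E) : E → ℕ :=
  fun g => if g ∈ L then (if c g = γ then δ else γ) else c g

lemma swOn_not_mem {g : E} (hg : g ∉ L) : swOn c γ δ L g = c g := by simp [swOn, hg]

lemma swOn_mem {g : E} (hg : g ∈ L) : swOn c γ δ L g = if c g = γ then δ else γ := by
  simp [swOn, hg]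

/-- a `γ`-`δ`-alternating segment inside `T` -/
structure Seg (G : Multigraph V E) (T : Set E) (c : E → ℕ) (γ δ : ℕ)
    (L : List E) (sup : List V) : Prop where
  hlen : sup.length = L.length + 1
  hne : L ≠ []
  hnd : sup.Nodup
  hinc : ∀ i (hi : i < L.length) (h1 : i < sup.length) (h2 : i + 1 < sup.length),
    G.inc L[i] = s(sup[i], sup[i+1])
  hmem : ∀ g ∈ L, g ∈ T
  halt : ∀ i (hi : i < L.length), c L[i] = if i % 2 = 0 then γ else δ

namespace Seg

lemma pos_len (seg : Seg G T c γ δ L sup) : 0 < L.length := List.length_pos_iff.2 seg.hne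

lemma sup_inj (seg : Seg G T c γ δ L sup) {i j : ℕ} (hi : i < sup.length)
    (hj : j < sup.length) (h : sup[i] = sup[j]) : i = j :=
  (List.Nodup.getElem_inj_iff seg.hnd).1 h

lemma vertex_cases (seg : Seg G T c γ δ L sup) {i : ℕ} (hi : i < L.length) {z : V}
    (hz : z ∈ G.inc L[i]) :
    ∃ (h2 : i + 1 < sup.length), z = sup[i]'(by omega) ∨ z = sup[i+1] := by
  have h1 : i < sup.length := by rw [seg.hlen]; omega
  have h2 : i + 1 < sup.length := by rw [seg.hlen]; omega
  rw [seg.hinc i hi h1 h2, Sym2.mem_iff] at hz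
  exact ⟨h2, hz⟩

lemma mem_getElem (seg : Seg G T c γ δ L sup) {g : E} (hg : g ∈ L) :
    ∃ (i : ℕ) (hi : i < L.length), L[i] = g := by
  simpa using List.mem_iff_getElem.1 hg

lemma inc_left (seg : Seg G T c γ δ L sup) {i : ℕ} (hi : i < L.length)
    (h1 : i < sup.length) : sup[i] ∈ G.inc L[i] := by
  rw [seg.hinc i hi h1 (by rw [seg.hlen]; omega)]
  exact Sym2.mem_mk_left _ _

lemma inc_right (seg : Seg G T c γ δ L sup) {i : ℕ} (hi : i < L.length)
    (h2 : i + 1 < sup.length) : sup[i+1] ∈ G.inc L[i] := by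
  rw [seg.hinc i hi (by rw [seg.hlen]; omega) h2]
  exact Sym2.mem_mk_right _ _

lemma not_mem_sup (seg : Seg G T c γ δ L sup) {z : V}
    (hz : ∀ k (hk : k < sup.length), sup[k] ≠ z) {g : E} (hg : g ∈ L) : z ∉ G.inc g := by
  intro hzin
  obtain ⟨i, hi, rfl⟩ := seg.mem_getElem hg
  obtain ⟨h2, hcase⟩ := seg.vertex_cases hi hzin
  rcases hcase with h | h
  · exact hz i (by omega) h.symm
  · exact hz (i+1) h2 h.symm

end Seg

lemma swapSeg_proper (hc : G.ProperOn T c n) (seg : Seg G T c γ δ L sup)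
    (hγn : γ < n) (hδn : δ < n) (hγδ : γ ≠ δ)
    (hE1 : ∀ g ∈ T, g ∉ L → ∀ (h0 : 0 < sup.length), sup[0] ∈ G.inc g → c g ≠ δ)
    (hE2 : ∀ g ∈ T, g ∉ L → ∀ (hl : L.length < sup.length), sup[L.length] ∈ G.inc g →
      c g ≠ (if L.length % 2 = 0 then γ else δ)) :
    G.ProperOn T (swOn c γ δ L) n := by
  have hcol : ∀ i (hi : i < L.length), c L[i] = γ ∨ c L[i] = δ := by
    intro i hi
    rw [seg.halt i hi]
    split <;> simp
  -- key : an in-segment edge and an out-segment edge sharing a vertex keep distinct colors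
  have key : ∀ g ∈ T, g ∈ L → ∀ h ∈ T, h ∉ L → ∀ z : V, z ∈ G.inc g → z ∈ G.inc h →
      swOn c γ δ L g ≠ c h := by
    intro g hgT hgL h hhT hhL z hzg hzh heq
    obtain ⟨i, hi, rfl⟩ := seg.mem_getElem hgL
    rw [swOn_mem hgL] at heq
    obtain ⟨h2, hcase⟩ := seg.vertex_cases hi hzg
    rcases hcase with hz | hz
    · match i, hi with
      | 0, hi =>
        have hL0 : c L[0] = γ := by rw [seg.halt 0 hi]; simp
        rw [if_pos hL0] at heq
        exact hE1 h hhT hhL (by omega) (hz ▸ hzh) heq.symm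
      | (j+1), hi =>
        have hjL : j < L.length := by omega
        have hswap : (if c L[j+1] = γ then δ else γ) = c L[j] := by
          rw [seg.halt j hjL, seg.halt (j+1) hi]
          rcases Nat.even_or_odd j with he | ho
          · have e1 : j % 2 = 0 := Nat.even_iff.1 he
            have e2 : (j+1) % 2 = 1 := by omega
            simp [e1, e2, hγδ, Ne.symm hγδ]
          · have e1 : j % 2 = 1 := Nat.odd_iff.1 ho
            have e2 : (j+1) % 2 = 0 := by omega
            simp [e1, e2, hγδ, Ne.symm hγδ]
        rw [hswap] at heq
        have hLjne : h ≠ L[j] := fun hh => hhL (hh ▸ List.getElem_mem _)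
        have hzLj : z ∈ G.inc L[j] := hz ▸ seg.inc_right hjL (by omega)
        exact hc.unique hhT (seg.hmem _ (List.getElem_mem _)) hLjne hzh hzLj heq.symm
    · rcases Nat.lt_or_ge (i+1) L.length with hlt | hge
      · have hswap : (if c L[i] = γ then δ else γ) = c L[i+1] := by
          rw [seg.halt i hi, seg.halt (i+1) hlt]
          rcases Nat.even_or_odd i with he | ho
          · have e1 : i % 2 = 0 := Nat.even_iff.1 he
            have e2 : (i+1) % 2 = 1 := by omega
            simp [e1, e2, hγδ, Ne.symm hγδ]
          · have e1 : i % 2 = 1 := Nat.odd_iff.1 ho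
            have e2 : (i+1) % 2 = 0 := by omega
            simp [e1, e2, hγδ, Ne.symm hγδ]
        rw [hswap] at heq
        have hLne : h ≠ L[i+1] := fun hh => hhL (hh ▸ List.getElem_mem _)
        have hzL : z ∈ G.inc L[i+1] := hz ▸ seg.inc_left hlt h2
        exact hc.unique hhT (seg.hmem _ (List.getElem_mem _)) hLne hzh hzL heq.symm
      · have hieq : i + 1 = L.length := by omega
        have hswap : (if c L[i] = γ then δ else γ) = if L.length % 2 = 0 then γ else δ := by
          rw [seg.halt i hi]
          rcases Nat.even_or_odd i with he | ho
          · have e1 : i % 2 = 0 := Nat.even_iff.1 he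
            have e2 : L.length % 2 = 1 := by omega
            simp [e1, e2, hγδ, Ne.symm hγδ]
          · have e1 : i % 2 = 1 := Nat.odd_iff.1 ho
            have e2 : L.length % 2 = 0 := by omega
            simp [e1, e2, hγδ, Ne.symm hγδ]
        rw [hswap] at heq
        have hzsup : sup[L.length]'(by rw [seg.hlen]; omega) ∈ G.inc h := by
          have : (sup[i+1]'h2) = sup[L.length]'(by rw [seg.hlen]; omega) := by
            congr 1
          rw [← this]
          exact hz ▸ hzh
        exact hE2 h hhT hhL (by rw [seg.hlen]; omega) hzsup heq.symm
  constructor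
  · intro g hg
    by_cases hgL : g ∈ L
    · rw [swOn_mem hgL]
      split <;> assumption
    · rw [swOn_not_mem hgL]
      exact hc.1 g hg
  · intro g hg h hh hne hsh
    obtain ⟨z, hzg, hzh⟩ := hsh
    by_cases hgL : g ∈ L <;> by_cases hhL : h ∈ L
    · -- both in the segment
      rw [swOn_mem hgL, swOn_mem hhL]
      obtain ⟨i, hi, rfl⟩ := seg.mem_getElem hgL
      obtain ⟨j, hj, rfl⟩ := seg.mem_getElem hhL
      have hcd := hc.unique (seg.hmem _ hgL) (seg.hmem _ hhL) hne hzg hzh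
      rcases hcol i hi with h1 | h1 <;> rcases hcol j hj with h2 | h2 <;>
        simp [h1, h2, hγδ, Ne.symm hγδ] at hcd ⊢
    · rw [swOn_not_mem hhL]
      exact key g hg hgL h hh hhL z hzg hzh
    · rw [swOn_not_mem hgL]
      exact fun hh' => key h hh hhL g hg hgL z hzh hzg hh'.symm
    · rw [swOn_not_mem hgL, swOn_not_mem hhL]
      exact hc.unique hg hh hne hzg hzh

lemma swapSeg_missing_head (hc : G.ProperOn T c n) (seg : Seg G T c γ δ L sup) (hγδ : γ ≠ δ) :
    ∀ (h0 : 0 < sup.length), G.MissingAt T (swOn c γ δ L) γ (sup[0]) := by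
  intro h0 g hgT hzg hcg
  by_cases hgL : g ∈ L
  · obtain ⟨i, hi, rfl⟩ := seg.mem_getElem hgL
    obtain ⟨h2, hcase⟩ := seg.vertex_cases hi hzg
    have hieq : i = 0 := by
      rcases hcase with hz | hz
      · exact seg.sup_inj (by omega) h0 hz.symm ▸ rfl
      · exact absurd (seg.sup_inj h2 h0 hz.symm) (by omega)
    subst hieq
    have hL0 : c L[0] = γ := by rw [seg.halt 0 hi]; simp
    rw [swOn_mem hgL, if_pos hL0] at hcg
    exact hγδ hcg.symm
  · rw [swOn_not_mem hgL] at hcg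
    have h0L : 0 < L.length := seg.pos_len
    have hL0 : c L[0] = γ := by rw [seg.halt 0 h0L]; simp
    have hne : g ≠ L[0] := fun hh => hgL (hh ▸ List.getElem_mem _)
    have hv0 : sup[0] ∈ G.inc L[0] := seg.inc_left h0L h0
    exact hc.unique hgT (seg.hmem _ (List.getElem_mem _)) hne hzg hv0 (by rw [hcg, hL0])

lemma swapSeg_missing_last (hc : G.ProperOn T c n) (seg : Seg G T c γ δ L sup) (hγδ : γ ≠ δ)
    (hpar : L.length % 2 = 0) :
    ∀ (hl : L.length < sup.length), G.MissingAt T (swOn c γ δ L) δ (sup[L.length]) := by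
  intro hl g hgT hzg hcg
  have hpos := seg.pos_len
  have hl1 : L.length - 1 < L.length := by omega
  have hlast : c L[L.length - 1] = δ := by
    rw [seg.halt _ hl1, show (L.length - 1) % 2 = 1 by omega]
    simp
  have hlin : sup[L.length] ∈ G.inc L[L.length - 1] := by
    have h5 := seg.inc_right (i := L.length - 1) hl1 (by rw [seg.hlen]; omega)
    have heq : (sup[L.length - 1 + 1]'(by rw [seg.hlen]; omega))
        = sup[L.length]'(by rw [seg.hlen]; omega) := by congr 1; omega
    rwa [heq] at h5
  by_cases hgL : g ∈ L
  · obtain ⟨i, hi, rfl⟩ := seg.mem_getElem hgL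
    obtain ⟨h2, hcase⟩ := seg.vertex_cases hi hzg
    have hieq : i = L.length - 1 := by
      rcases hcase with hz | hz
      · have := seg.sup_inj (by omega) hl hz.symm
        omega
      · have := seg.sup_inj h2 hl hz.symm
        omega
    subst hieq
    rw [swOn_mem hgL, hlast] at hcg
    rw [if_neg (Ne.symm hγδ)] at hcg
    exact hγδ hcg
  · rw [swOn_not_mem hgL] at hcg
    have hne : g ≠ L[L.length - 1] := fun hh => hgL (hh ▸ List.getElem_mem _)
    exact hc.unique hgT (seg.hmem _ (List.getElem_mem _)) hne hzg hlin (by rw [hcg, hlast])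

lemma swapSeg_missing_not_sup (seg : Seg G T c γ δ L sup) {z : V}
    (hz : ∀ k (hk : k < sup.length), sup[k] ≠ z) {ρ : ℕ}
    (h : G.MissingAt T c ρ z) : G.MissingAt T (swOn c γ δ L) ρ z := by
  intro g hgT hzg
  by_cases hgL : g ∈ L
  · exact absurd hzg (seg.not_mem_sup hz hgL)
  · rw [swOn_not_mem hgL]
    exact h g hgT hzg

lemma swapSeg_missing_pres {ρ : ℕ} (hργ : ρ ≠ γ) (hρδ : ρ ≠ δ) {z : V}
    (h : G.MissingAt T c ρ z) : G.MissingAt T (swOn c γ δ L) ρ z := by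
  intro g hgT hzg
  by_cases hgL : g ∈ L
  · rw [swOn_mem hgL]
    split
    · exact Ne.symm hρδ
    · exact Ne.symm hργ
  · rw [swOn_not_mem hgL]
    exact h g hgT hzg

end Multigraph
namespace Multigraph

open scoped Classical

set_option maxHeartbeats 1000000
set_option linter.unusedSectionVars false
set_option linter.unusedVariables false

variable {V E : Type} [Fintype V] [Fintype E] {G : Multigraph V E} {S : Set E} {c : E → ℕ}

lemma exists_altPath (hS : G.IsMaxColorable S) (hc : G.ProperOn S c G.maxDeg)
    {e : E} {u v : V} {α β : ℕ} (he : e ∉ S) (hinc : G.inc e = s(u, v))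
    (hαn : α < G.maxDeg) (hmu : G.MissingAt S c α u)
    (hβn : β < G.maxDeg) (hmv : G.MissingAt S c β v) :
    ∃ L sup, AltPath G S c G.maxDeg α β u v L sup := by
  have huv : u ≠ v := by
    intro h
    exact G.loopless e (by rw [hinc, h]; exact Sym2.mk_isDiag_iff.2 rfl)
  have hαβ : α ≠ β := fun h => no_common_missing hS hc he hinc hαn hmu (h ▸ hmv)
  set m := Fintype.card E with hm
  set L := (build G S c m α β v ∅).1 with hL
  set sup := (build G S c m α β v ∅).2 with hsup
  have spec := build_spec (G := G) (S := S) (c := c) m α β v ∅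
  rw [← hL, ← hsup] at spec
  have hstop := build_stop (G := G) (S := S) (c := c) m α β v ∅
    (by rw [show {g : E | g ∉ (∅ : Set E)} = Set.univ by ext g; simp, Set.ncard_univ,
      Nat.card_eq_fintype_card])
  rw [← hL, ← hsup] at hstop
  have hnd : sup.Nodup := support_nodup_of_alt (u_ := u) hc spec.hlen spec.hhead spec.hinc
    spec.halt (fun g hg => (spec.hmem g hg).1) spec.hnd hmv hαβ trivial
  have hsupne : sup ≠ [] := by
    intro hh
    have h5 := spec.hlen
    rw [hh] at h5
    simp at h5
  set w' := sup.getLast hsupne with hw'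
  have hlast? : sup.getLast? = some w' := List.getLast?_eq_getLast _
  have hlastElem : sup[L.length]'(by rw [spec.hlen]; omega) = w' := by
    rw [hw', List.getLast_eq_getElem]
    congr 1
    rw [spec.hlen]
    omega
  have hnilv : L = [] → w' = v := by
    intro hh
    have h0 : (0 : ℕ) < sup.length := by rw [spec.hlen]; omega
    have h5 : sup[0] = w' := by
      rw [← hlastElem]
      congr 1
      rw [hh]
      rfl
    rw [← h5, getElem?_some' spec.hhead h0]
  have hwu : w' = u := by
    by_contra hwu
    rcases eq_or_ne L [] with hLnil | hLne
    · have hmv' : G.MissingAt S c α v := by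
        intro g hgS hvg hcg
        have h6 := hstop g hgS (by simp) (by rw [hLnil]; simp) w' hlast?
          (by rw [hnilv hLnil]; exact hvg)
        rw [hLnil] at h6
        simp only [List.length_nil, Nat.zero_mod, if_pos rfl] at h6
        exact h6 hcg
      exact no_common_missing hS hc he hinc hαn hmu hmv'
    · have seg : Seg G S c α β L sup :=
        ⟨spec.hlen, hLne, hnd, spec.hinc, fun g hg => (spec.hmem g hg).1, spec.halt⟩
      have hE1 : ∀ g ∈ S, g ∉ L → ∀ (h0 : 0 < sup.length), sup[0] ∈ G.inc g → c g ≠ β := by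
        intro g hgS hgL h0 hzg
        rw [getElem?_some' spec.hhead h0] at hzg
        exact hmv g hgS hzg
      have hE2 : ∀ g ∈ S, g ∉ L → ∀ (hl : L.length < sup.length), sup[L.length] ∈ G.inc g →
          c g ≠ (if L.length % 2 = 0 then α else β) := by
        intro g hgS hgL hl hzg
        exact hstop g hgS (by simp) hgL w' hlast? (by rwa [hlastElem] at hzg)
      have hproper := swapSeg_proper hc seg hαn hβn hαβ hE1 hE2
      have hmv2 : G.MissingAt S (swOn c α β L) α v := by
        have h7 := swapSeg_missing_head hc seg hαβ (by rw [spec.hlen]; omega)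
        rwa [getElem?_some' spec.hhead (by rw [spec.hlen]; omega)] at h7
      have husup : ∀ k (hk : k < sup.length), sup[k] ≠ u := by
        intro k hk hku
        rcases Nat.eq_zero_or_pos k with rfl | hkpos
        · rw [getElem?_some' spec.hhead hk] at hku
          exact huv hku.symm
        · rcases Nat.lt_or_ge k (sup.length - 1) with hlt | hge
          · obtain ⟨j, rfl⟩ : ∃ j, k = j + 1 := ⟨k-1, by omega⟩
            have hlen5 := spec.hlen
            have hjL : j < L.length := by omega
            have hj1L : j + 1 < L.length := by omega
            have hin1 : sup[j+1] ∈ G.inc L[j] := seg.inc_right hjL hk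
            have hin2 : sup[j+1] ∈ G.inc L[j+1] := seg.inc_left hj1L hk
            rcases Nat.even_or_odd j with hev | hod
            · exact hmu _ ((spec.hmem _ (List.getElem_mem _)).1) (hku ▸ hin1)
                (by rw [spec.halt j hjL, if_pos (Nat.even_iff.1 hev)])
            · exact hmu _ ((spec.hmem _ (List.getElem_mem _)).1) (hku ▸ hin2)
                (by rw [spec.halt (j+1) hj1L,
                  if_pos (show (j+1) % 2 = 0 by have := Nat.odd_iff.1 hod; omega)])
          · have hkeq : k = L.length := by have := spec.hlen; omega
            have h8 : sup[k] = w' := by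
              rw [← hlastElem]
              congr 1
            exact hwu (h8.symm.trans hku)
      have hmu2 : G.MissingAt S (swOn c α β L) α u := swapSeg_missing_not_sup seg husup hmu
      exact card_contra hS ⟨_, hproper.insertEdge he hinc hαn hmu2 hmv2⟩
        (by rw [Set.ncard_insert_of_notMem he S.toFinite]; omega)
  have hLne : L ≠ [] := fun hh => huv ((hwu.symm.trans (hnilv hh)))
  refine ⟨L, sup, ⟨spec.hlen, hLne, spec.hhead, ?_, hnd, spec.hinc,
    fun g hg => (spec.hmem g hg).1, spec.halt, hmu, hmv, hαn, hβn, hαβ⟩⟩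
  rw [List.getElem?_eq_getElem (by rw [spec.hlen]; omega), hlastElem, hwu]

end Multigraph
namespace Multigraph

open scoped Classical

set_option maxHeartbeats 1000000
set_option linter.unusedSectionVars false
set_option linter.unusedVariables false

variable {V E : Type} [Fintype V] [Fintype E] {G : Multigraph V E} {S : Set E} {c : E → ℕ}

lemma exists_walk_of_lists (G : Multigraph V E) :
    ∀ (L : List E) (sup : List V) (v u : V), sup.length = L.length + 1 →
      sup[0]? = some v → sup[L.length]? = some u →
      (∀ i (hi : i < L.length) (h1 : i < sup.length) (h2 : i + 1 < sup.length),
        G.inc L[i] = s(sup[i], sup[i+1])) →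
      ∃ p : G.Walk v u, p.edges = L ∧ p.support = sup := by
  intro L
  induction L with
  | nil =>
    intro sup v u hlen hv hu hinc
    match sup, hlen with
    | [x], _ =>
      have hxv : x = v := by simpa using hv
      have hxu : x = u := by simpa using hu
      subst hxv
      subst hxu
      exact ⟨Walk.nil x, rfl, rfl⟩
  | cons g L ih =>
    intro sup v u hlen hv hu hinc
    match sup, hlen with
    | (x :: y :: rest), hlen =>
      have hxv : x = v := by simpa using hv
      subst hxv
      have hlen' : (y :: rest).length = L.length + 1 := by simpa using hlen
      have hu' : (y :: rest)[L.length]? = some u := by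
        have : (x :: y :: rest)[(g :: L).length]? = (y :: rest)[L.length]? := by
          simp
        rwa [this] at hu
      have hinc' : ∀ i (hi : i < L.length) (h1 : i < (y :: rest).length)
          (h2 : i + 1 < (y :: rest).length),
          G.inc L[i] = s((y :: rest)[i], (y :: rest)[i+1]) := by
        intro i hi h1 h2
        have h5 := hinc (i+1) (by simpa using hi) (by simpa using h1) (by simpa using h2)
        simpa using h5
      obtain ⟨p, hpe, hps⟩ := ih (y :: rest) y u hlen' (by simp) hu' hinc'
      have hincg : G.inc g = s(x, y) := by
        have h5 := hinc 0 (by simp) (by simp) (by simp)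
        simpa using h5
      exact ⟨Walk.cons g hincg p, by simp [Walk.edges, hpe], by simp [Walk.support, hps]⟩

lemma AltPath.isKempe (hc : G.ProperOn S c G.maxDeg) {e : E} {u v : V} {α β : ℕ}
    {L : List E} {sup : List V} (hinc : G.inc e = s(u, v))
    (ap : AltPath G S c G.maxDeg α β u v L sup) :
    G.IsKempeCycle S c e α β (insert e {g | g ∈ L}) := by
  obtain ⟨p, hpe, hps⟩ := exists_walk_of_lists G L sup v u ap.hlen ap.hv ap.hu ap.hinc
  refine ⟨ap.hαn, ap.hβn, u, v, p, hinc, ap.hmu, ap.hmv, ?_, ?_, ?_, ?_⟩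
  · rw [Walk.IsPath, hps]
    exact ap.hnd
  · rw [hpe]
    exact ap.hmem
  · rw [AltColors, hpe]
    intro i
    rw [List.get_eq_getElem]
    exact ap.halt i.1 i.2
  · rw [hpe]

end Multigraph
namespace Multigraph

open scoped Classical

set_option maxHeartbeats 1000000
set_option linter.unusedSectionVars false
set_option linter.unusedVariables false

variable {V E : Type} [Fintype V] [Fintype E] {G : Multigraph V E} {S : Set E} {c : E → ℕ}
  {n : ℕ}

lemma AltPath.rev {α β : ℕ} {u v : V} {L : List E} {sup : List V}
    (ap : AltPath G S c n α β u v L sup) :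
    AltPath G S c n β α v u L.reverse sup.reverse := by
  have hev := ap.len_even
  have hpos := ap.pos_len
  have hlen := ap.hlen
  refine ⟨by simp [hlen], by simp [ap.hne], ?_, ?_, by simpa using ap.hnd, ?_, ?_, ?_,
    ap.hmv, ap.hmu, ap.hβn, ap.hαn, ap.hαβ.symm⟩
  · rw [List.getElem?_eq_getElem (by rw [List.length_reverse, hlen]; omega)]
    refine congrArg some ?_
    rw [List.getElem_reverse]
    have h5 : (sup[sup.length - 1 - 0]'(by rw [hlen]; omega))
        = sup[L.length]'(by rw [hlen]; omega) := by congr 1; omega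
    rw [h5]
    exact ap.supLast (by rw [hlen]; omega)
  · rw [List.getElem?_eq_getElem (by rw [List.length_reverse, List.length_reverse, hlen]; omega)]
    refine congrArg some ?_
    rw [List.getElem_reverse]
    have h5 : (sup[sup.length - 1 - L.reverse.length]'(by rw [hlen]; omega))
        = sup[0]'(by rw [hlen]; omega) := by
      congr 1
      rw [List.length_reverse, hlen]
      omega
    rw [h5]
    exact ap.sup0 (by rw [hlen]; omega)
  · intro i hi h1 h2
    rw [List.length_reverse] at hi
    rw [List.getElem_reverse, List.getElem_reverse, List.getElem_reverse]
    have e1 : sup.length - 1 - i = L.length - i := by rw [hlen]; omega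
    have e2 : sup.length - 1 - (i+1) = L.length - 1 - i := by rw [hlen]; omega
    have hLi : L.length - 1 - i < L.length := by omega
    have h5 := ap.hinc (L.length - 1 - i) hLi (by rw [hlen]; omega) (by rw [hlen]; omega)
    have h6 : (sup[L.length - 1 - i + 1]'(by rw [hlen]; omega))
        = sup[sup.length - 1 - i]'(by rw [hlen]; omega) := by congr 1; rw [hlen]; omega
    have h7 : (sup[L.length - 1 - i]'(by rw [hlen]; omega))
        = sup[sup.length - 1 - (i+1)]'(by rw [hlen]; omega) := by congr 1; rw [hlen]; omega
    rw [h5, h6, h7]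
    exact Sym2.eq_swap
  · intro g hg
    exact ap.hmem g (List.mem_reverse.1 hg)
  · intro i hi
    rw [List.length_reverse] at hi
    rw [List.getElem_reverse]
    rw [ap.halt (L.length - 1 - i) (by omega)]
    rcases Nat.even_or_odd i with he | ho
    · have e1 : i % 2 = 0 := Nat.even_iff.1 he
      have e2 : (L.length - 1 - i) % 2 = 1 := by omega
      simp [e1, e2]
    · have e1 : i % 2 = 1 := Nat.odd_iff.1 ho
      have e2 : (L.length - 1 - i) % 2 = 0 := by omega
      simp [e1, e2]

end Multigraph
namespace Multigraph

open scoped Classical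

set_option maxHeartbeats 1000000
set_option linter.unusedSectionVars false
set_option linter.unusedVariables false

variable {V E : Type} [Fintype V] [Fintype E] {G : Multigraph V E} {S : Set E} {c : E → ℕ}
  {n : ℕ}

lemma AltPath.ne_uv {α β : ℕ} {u v : V} {L : List E} {sup : List V}
    (ap : AltPath G S c n α β u v L sup) : u ≠ v := by
  intro h
  have h1 : (sup[0]'(by rw [ap.hlen]; omega)) = v := ap.sup0 _
  have h2 : (sup[L.length]'(by rw [ap.hlen]; omega)) = u := ap.supLast _
  have := ap.sup_inj (i := 0) (j := L.length) (by rw [ap.hlen]; omega) (by rw [ap.hlen]; omega)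
    (by rw [h1, h2, h])
  have := ap.pos_len
  omega

/-- two maximal alternating paths with the same (ordered) colour pair sharing an edge
join the same pair of vertices. -/
lemma eq_pair_parallel (hc : G.ProperOn S c n) {α β : ℕ} {u v x y : V}
    {L M : List E} {sup supQ : List V}
    (apE : AltPath G S c n α β u v L sup) (apF : AltPath G S c n α β x y M supQ)
    {g : E} (hgL : g ∈ L) (hgM : g ∈ M) : s(u, v) = s(x, y) := by
  have hcolM : ∀ k (hk : k < M.length), c M[k] = α ∨ c M[k] = β := by
    intro k hk
    rw [apF.halt k hk]
    split <;> simp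
  have hstep_up : ∀ k (hk1 : k + 1 < M.length), (M[k]'(by omega)) ∈ L → M[k+1] ∈ L := by
    intro k hk1 hkL
    have hz1 : (supQ[k+1]'(by rw [apF.hlen]; omega)) ∈ G.inc (M[k]'(by omega)) :=
      apF.getElem_mem_inc_right (by omega) (by rw [apF.hlen]; omega)
    have hz2 : (supQ[k+1]'(by rw [apF.hlen]; omega)) ∈ G.inc M[k+1] :=
      apF.getElem_mem_inc_left hk1 (by rw [apF.hlen]; omega)
    obtain ⟨k', hk', hsk'⟩ := apE.mem_sup_of_inc hkL hz1
    exact apE.closure hc (apF.hmem _ (List.getElem_mem _)) hk' (hsk' ▸ hz2) (hcolM (k+1) hk1)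
  have hstep_down : ∀ k (hk1 : k + 1 < M.length), M[k+1] ∈ L → (M[k]'(by omega)) ∈ L := by
    intro k hk1 hkL
    have hz1 : (supQ[k+1]'(by rw [apF.hlen]; omega)) ∈ G.inc M[k+1] :=
      apF.getElem_mem_inc_left hk1 (by rw [apF.hlen]; omega)
    have hz2 : (supQ[k+1]'(by rw [apF.hlen]; omega)) ∈ G.inc (M[k]'(by omega)) :=
      apF.getElem_mem_inc_right (by omega) (by rw [apF.hlen]; omega)
    obtain ⟨k', hk', hsk'⟩ := apE.mem_sup_of_inc hkL hz1
    exact apE.closure hc (apF.hmem _ (List.getElem_mem _)) hk' (hsk' ▸ hz2) (hcolM k (by omega))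
  obtain ⟨k0, hk0, hk0g⟩ := apF.mem_getElem hgM
  have hall : ∀ k (hk : k < M.length), M[k] ∈ L := by
    have hup : ∀ k, k0 ≤ k → ∀ (hk : k < M.length), M[k] ∈ L := by
      intro k hk0k
      induction k, hk0k using Nat.le_induction with
      | base => intro hk; exact hk0g ▸ hgL
      | succ k hkk ih =>
        intro hk
        exact hstep_up k hk (ih (by omega))
    have hdown : ∀ d k (h : k + d = k0), (M[k]'(by omega)) ∈ L := by
      intro d
      induction d with
      | zero => intro k hk; exact hup k (by omega) (by omega)
      | succ d ih =>
        intro k hk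
        exact hstep_down k (by omega) (ih (k+1) (by omega))
    intro k hk
    rcases Nat.lt_or_ge k k0 with h | h
    · exact hdown (k0 - k) k (by omega) 
    · exact hup k h hk
  have hposM := apF.pos_len
  -- y is an endpoint of the path L
  have hy : y = v ∨ y = u := by
    have hyM : y ∈ G.inc M[0] := by
      have := apF.getElem_mem_inc_left (i := 0) hposM (by rw [apF.hlen]; omega)
      rwa [apF.sup0 (by rw [apF.hlen]; omega)] at this
    obtain ⟨k', hk', hsk'⟩ := apE.mem_sup_of_inc (hall 0 hposM) hyM
    rcases Nat.eq_zero_or_pos k' with rfl | hk'pos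
    · left; rw [← hsk', apE.sup0]
    · rcases Nat.lt_or_ge k' L.length with hlt | hge
      · exfalso
        exact apE.interior_not_missing hk'pos hlt β (Or.inr rfl) (hsk' ▸ apF.hmv)
      · have hk'eq : k' = L.length := by rw [apE.hlen] at hk'; omega
        right
        rw [← hsk']
        have h5 : sup[k']'hk' = sup[L.length]'(by rw [apE.hlen]; omega) := by congr 1
        rw [h5, apE.supLast]
  -- x is an endpoint of the path L
  have hx : x = v ∨ x = u := by
    have hxM : x ∈ G.inc (M[M.length - 1]'(by omega)) := by
      have h5 := apF.getElem_mem_inc_right (i := M.length - 1) (by omega)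
        (by rw [apF.hlen]; omega)
      have heq : (supQ[M.length - 1 + 1]'(by rw [apF.hlen]; omega))
          = supQ[M.length]'(by rw [apF.hlen]; omega) := by congr 1; omega
      rw [heq, apF.supLast (by rw [apF.hlen]; omega)] at h5
      exact h5
    obtain ⟨k', hk', hsk'⟩ := apE.mem_sup_of_inc (hall (M.length - 1) (by omega)) hxM
    rcases Nat.eq_zero_or_pos k' with rfl | hk'pos
    · left; rw [← hsk', apE.sup0]
    · rcases Nat.lt_or_ge k' L.length with hlt | hge
      · exfalso
        exact apE.interior_not_missing hk'pos hlt α (Or.inl rfl) (hsk' ▸ apF.hmu)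
      · have hk'eq : k' = L.length := by rw [apE.hlen] at hk'; omega
        right
        rw [← hsk']
        have h5 : sup[k']'hk' = sup[L.length]'(by rw [apE.hlen]; omega) := by congr 1
        rw [h5, apE.supLast]
  have hxy := apF.ne_uv
  rcases hy with hy | hy <;> rcases hx with hx | hx
  · exact absurd (hx.trans hy.symm) hxy
  · rw [hx, hy]
  · rw [hx, hy]; exact Sym2.eq_swap
  · exact absurd (hx.trans hy.symm) hxy

end Multigraph
namespace Multigraph

open scoped Classical

set_option maxHeartbeats 4000000
set_option linter.unusedSectionVars false
set_option linter.unusedVariables false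

variable {V E : Type} [Fintype V] [Fintype E] {G : Multigraph V E} {S : Set E} {c : E → ℕ}

/-- Main disjointness lemma: two Kempe paths whose colour pairs share exactly the colour `γ`
(sitting at the `v`- resp. `y`-side) cannot share an edge. -/
lemma main_disjoint (hS : G.IsMaxColorable S) (hc : G.ProperOn S c G.maxDeg)
    {e f : E} {u v x y : V} {α α' γ : ℕ} {L M : List E} {sup supQ : List V}
    (he : e ∉ S) (hf : f ∉ S) (hef : e ≠ f)
    (hince : G.inc e = s(u, v)) (hincf : G.inc f = s(x, y))
    (apE : AltPath G S c G.maxDeg α γ u v L sup)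
    (apF : AltPath G S c G.maxDeg α' γ x y M supQ)
    (haa : α ≠ α') (hvy : v ≠ y) {g0 : E} (hg0L : g0 ∈ L) (hg0M : g0 ∈ M) : False := by
  have hαγ : α ≠ γ := apE.hαβ
  have hα'γ : α' ≠ γ := apF.hαβ
  -- coincidence kills
  by_cases huy : u = y
  · exact no_common_missing hS hc he hince apE.hβn (huy ▸ apF.hmv) apE.hmv
  by_cases hvx : v = x
  · exact no_common_missing hS hc hf hincf apF.hβn (hvx ▸ apE.hmv) apF.hmv
  -- every shared edge has colour γ
  have hshared : ∀ h, h ∈ L → h ∈ M → c h = γ := by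
    intro h h1 h2
    obtain ⟨i, hi, rfl⟩ := apE.mem_getElem h1
    have hcL := apE.halt i hi
    obtain ⟨j, hj, hh⟩ := apF.mem_getElem h2
    have hcM := apF.halt j hj
    rw [hh] at hcM
    by_cases hpi : i % 2 = 0
    · rw [if_pos hpi] at hcL
      by_cases hpj : j % 2 = 0
      · rw [if_pos hpj] at hcM
        exact absurd (hcL.symm.trans hcM) haa
      · rw [if_neg hpj] at hcM
        exact absurd (hcL.symm.trans hcM) hαγ
    · rw [if_neg hpi] at hcL
      exact hcL
  -- the first shared edge along M
  have hex : ∃ j, ∃ (hj : j < M.length), M[j] ∈ L := by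
    obtain ⟨j, hj, hh⟩ := apF.mem_getElem hg0M
    exact ⟨j, hj, hh ▸ hg0L⟩
  classical
  set j' := Nat.find hex with hj'def
  obtain ⟨hjM, hgsL⟩ : ∃ (hj : j' < M.length), M[j'] ∈ L := Nat.find_spec hex
  have hjmin : ∀ k, k < j' → ∀ (hk : k < M.length), M[k] ∉ L := by
    intro k hk hkM hkL
    exact Nat.find_min hex hk ⟨hkM, hkL⟩
  set gs := M[j']'hjM with hgsdef
  obtain ⟨i', hiL, hieq⟩ := apE.mem_getElem hgsL
  have hγgs : c gs = γ := hshared gs hgsL (List.getElem_mem _)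
  have hjodd : j' % 2 = 1 := by
    have h5 : c gs = if j' % 2 = 0 then α' else γ := apF.halt j' hjM
    rw [hγgs] at h5
    by_cases hp : j' % 2 = 0
    · rw [if_pos hp] at h5
      exact absurd h5.symm hα'γ
    · omega
  have hiodd : i' % 2 = 1 := by
    have h6 : c (L[i']'hiL) = c gs := congrArg c hieq
    have h5 : c gs = if i' % 2 = 0 then α else γ := h6.symm.trans (apE.halt i' hiL)
    rw [hγgs] at h5
    by_cases hp : i' % 2 = 0
    · rw [if_pos hp] at h5
      exact absurd h5.symm hαγ
    · omega
  have hlenE := apE.hlen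
  have hlenF := apF.hlen
  have hevE := apE.len_even
  have hgsS : gs ∈ S := apF.hmem gs (List.getElem_mem _)
  -- T₁ : colored edges without g*
  set T₁ : Set E := S \ {gs} with hT₁
  have hT1S : T₁ ⊆ S := Set.diff_subset
  have hc₁ : G.ProperOn T₁ c G.maxDeg := hc.mono hT1S
  have hgsT : gs ∉ T₁ := by simp [hT₁]
  have hmemT₁ : ∀ h ∈ S, h ≠ gs → h ∈ T₁ := fun h h1 h2 => ⟨h1, h2⟩
  have heT : e ∉ T₁ := fun h => he (hT1S h)
  have hfT : f ∉ T₁ := fun h => hf (hT1S h)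
  -- incidences of g*
  have hIg : G.inc (L[i']'hiL) = G.inc gs := congrArg G.inc hieq
  have hgsl : (sup[i']'(by omega)) ∈ G.inc gs :=
    hIg ▸ apE.getElem_mem_inc_left hiL (by omega)
  have hgsr : (sup[i'+1]'(by rw [hlenE]; omega)) ∈ G.inc gs :=
    hIg ▸ apE.getElem_mem_inc_right hiL (by rw [hlenE]; omega)
  have hgsl' : (supQ[j']'(by omega)) ∈ G.inc gs :=
    apF.getElem_mem_inc_left hjM (by omega)
  have hgsr' : (supQ[j'+1]'(by rw [hlenF]; omega)) ∈ G.inc gs :=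
    apF.getElem_mem_inc_right hjM (by rw [hlenF]; omega)
  -- unique γ-edge
  have huniq : ∀ h ∈ T₁, ∀ z : V, z ∈ G.inc gs → z ∈ G.inc h → c h ≠ γ := by
    intro h hhT z hz1 hz2 hch
    have hne : h ≠ gs := fun hh => hgsT (hh ▸ hhT)
    exact hc.unique (hT1S hhT) hgsS hne hz2 hz1 (hch.trans hγgs.symm)
  -- the prefix of M before g*
  set Lc := M.take j' with hLc
  set supc := supQ.take (j'+1) with hsupc
  have hLclen : Lc.length = j' := by rw [hLc, List.length_take]; omega
  have hsupclen : supc.length = j' + 1 := by rw [hsupc, List.length_take, hlenF]; omega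
  have hLcElem : ∀ k (hk : k < Lc.length), Lc[k] = M[k]'(by omega) := by
    intro k hk
    exact List.getElem_take ..
  have hsupcElem : ∀ k (hk : k < supc.length), supc[k] = supQ[k]'(by rw [hlenF]; omega) := by
    intro k hk
    exact List.getElem_take ..
  have hLcL : ∀ h ∈ Lc, h ∉ L := by
    intro h hh
    obtain ⟨k, hk, hkh⟩ := List.mem_iff_getElem.1 hh
    rw [hLcElem k hk] at hkh
    exact hkh ▸ hjmin k (by omega) (by omega)
  have hLcmem : ∀ h ∈ Lc, h ∈ T₁ := by
    intro h hh
    obtain ⟨k, hk, hkh⟩ := List.mem_iff_getElem.1 hh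
    rw [hLcElem k hk] at hkh
    refine hmemT₁ h (hkh ▸ apF.hmem _ (List.getElem_mem _)) ?_
    intro hcon
    rw [← hkh] at hcon
    have := (List.Nodup.getElem_inj_iff apF.nodupL).1 (hcon.trans hgsdef)
    omega
  have segC : Seg G T₁ c α' γ Lc supc := by
    refine ⟨by omega, ?_, ?_, ?_, hLcmem, ?_⟩
    · intro hh
      rw [hh] at hLclen
      simp at hLclen
      omega
    · exact (List.take_sublist _ _).nodup apF.hnd
    · intro i hi h1 h2
      rw [hLcElem i hi, hsupcElem i h1, hsupcElem (i+1) h2]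
      exact apF.hinc i (by omega) (by rw [hlenF]; omega) (by rw [hlenF]; omega)
    · intro i hi
      rw [hLcElem i hi]
      exact apF.halt i (by omega)
  -- end vertices of the C-segment
  have hsupc0 : supc[0]'(by omega) = y := by
    rw [hsupcElem 0 (by omega)]
    exact apF.sup0 _
  have hsupcLast : supc[Lc.length]'(by omega) = supQ[j']'(by omega) := by
    have h5 := hsupcElem Lc.length (by omega)
    rw [h5]
    congr 1 <;> omega
  -- E-conditions for swapping the C-segment
  have hE1C : ∀ h ∈ T₁, h ∉ Lc → ∀ (h0 : 0 < supc.length), supc[0] ∈ G.inc h → c h ≠ γ := by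
    intro h hh hhc h0 hzh
    rw [hsupc0] at hzh
    exact apF.hmv h (hT1S hh) hzh
  have hE2C : ∀ h ∈ T₁, h ∉ Lc → ∀ (hl : Lc.length < supc.length),
      supc[Lc.length] ∈ G.inc h → c h ≠ (if Lc.length % 2 = 0 then α' else γ) := by
    intro h hh hhc hl hzh
    rw [hsupcLast] at hzh
    rw [show (if Lc.length % 2 = 0 then α' else γ) = γ by rw [if_neg]; omega]
    exact huniq h hh _ hgsl' hzh
  set c₁ := swOn c α' γ Lc with hc₁def
  have proper₁ : G.ProperOn T₁ c₁ G.maxDeg :=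
    swapSeg_proper hc₁ segC apF.hαn apF.hβn apF.hαβ hE1C hE2C
  -- missing colours after the first swap
  have hyα' : G.MissingAt T₁ c₁ α' y := by
    have h5 := swapSeg_missing_head hc₁ segC apF.hαβ (by omega)
    rwa [hsupc0] at h5
  have hxnotc : ∀ k (hk : k < supc.length), supc[k] ≠ x := by
    intro k hk hkx
    rw [hsupcElem k hk] at hkx
    have hxQ : (supQ[M.length]'(by omega)) = x := apF.supLast (by omega)
    have := apF.sup_inj (i := k) (j := M.length) (by rw [hlenF]; omega) (by omega)
      (by rw [hkx, hxQ])
    omega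
  have hxα'₁ : G.MissingAt T₁ c₁ α' x :=
    swapSeg_missing_not_sup segC hxnotc (apF.hmu.mono hT1S)
  -- a vertex missing γ that is distinct from y is not on the C-segment
  have hnotc : ∀ z : V, G.MissingAt S c γ z → z ≠ y → ∀ k (hk : k < supc.length), supc[k] ≠ z := by
    intro z hmz hzy k hk hkz
    rw [hsupcElem k hk] at hkz
    rcases Nat.eq_zero_or_pos k with rfl | hkpos
    · exact hzy ((apF.sup0 (by omega)) ▸ hkz ▸ rfl)
    · exact apF.interior_not_missing (k := k) hkpos (by omega) γ (Or.inr rfl) (hkz ▸ hmz)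
  have hvnotc : ∀ k (hk : k < supc.length), supc[k] ≠ v := hnotc v apE.hmv hvy
  have hvγ₁ : G.MissingAt T₁ c₁ γ v :=
    swapSeg_missing_not_sup segC hvnotc (apE.hmv.mono hT1S)
  -- now the two branches :
  have hcases : ((sup[i']'(by omega)) = supQ[j']'(by omega)
        ∧ (sup[i'+1]'(by rw [hlenE]; omega)) = supQ[j'+1]'(by rw [hlenF]; omega))
      ∨ ((sup[i']'(by omega)) = supQ[j'+1]'(by rw [hlenF]; omega)
        ∧ (sup[i'+1]'(by rw [hlenE]; omega)) = supQ[j']'(by omega)) := by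
    have h5 : s((sup[i']'(by omega)), (sup[i'+1]'(by rw [hlenE]; omega)))
        = s((supQ[j']'(by omega)), (supQ[j'+1]'(by rw [hlenF]; omega))) := by
      rw [← apE.hinc i' hiL (by omega) (by rw [hlenE]; omega), hieq, hgsdef,
        apF.hinc j' hjM (by omega) (by rw [hlenF]; omega)]
    rwa [Sym2.eq_iff] at h5
  -- final contradiction once `u`/`v` miss `ρ` and `x`/`y` miss `α'`
  have hfinal : ∀ c₂ : E → ℕ, G.ProperOn T₁ c₂ G.maxDeg →
      ∀ ρ, ρ < G.maxDeg → G.MissingAt T₁ c₂ ρ u → G.MissingAt T₁ c₂ ρ v →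
      G.MissingAt T₁ c₂ α' x → G.MissingAt T₁ c₂ α' y → ρ ≠ α' → False := by
    intro c₂ hp ρ hρ hu2 hv2 hx2 hy2 hρα'
    have hp3 := hp.insertEdge heT hince hρ hu2 hv2
    have hx3 : G.MissingAt (insert e T₁) (Function.update c₂ e ρ) α' x := hx2.insertEdge hρα'
    have hy3 : G.MissingAt (insert e T₁) (Function.update c₂ e ρ) α' y := hy2.insertEdge hρα'
    have hf3 : f ∉ insert e T₁ := by
      intro hh
      rcases Set.mem_insert_iff.1 hh with h | h
      · exact hef h.symm
      · exact hfT h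
    have hp4 := hp3.insertEdge hf3 hincf apF.hαn hx3 hy3
    refine card_contra hS ⟨_, hp4⟩ ?_
    have h1 : T₁.ncard = S.ncard - 1 := Set.ncard_diff_singleton_of_mem hgsS
    have hSpos : 0 < S.ncard := (Set.ncard_pos S.toFinite).2 ⟨gs, hgsS⟩
    have h2 : (insert e T₁).ncard = T₁.ncard + 1 :=
      Set.ncard_insert_of_notMem heT (Set.toFinite _)
    have h3 : (insert f (insert e T₁)).ncard = T₁.ncard + 2 := by
      rw [Set.ncard_insert_of_notMem hf3 (Set.toFinite _), h2]
    omega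
  -- identification of u at the end of the P-path
  have huElem : ∀ (h9 : L.length < sup.length), sup[L.length] = u := fun h9 => apE.supLast h9
  rcases hcases with ⟨hss, hts⟩ | ⟨hso, hto⟩
  · -- SAME direction
    by_cases hRe : i' + 1 = L.length
    · -- P-suffix empty : no second swap needed
      have huQ : sup[i'+1]'(by rw [hlenE]; omega) = u := by
        have h9 : sup[i'+1]'(by rw [hlenE]; omega) = sup[L.length]'(by rw [hlenE]; omega) := by
          congr 1 <;> omega
        rw [h9]
        exact apE.supLast (by rw [hlenE]; omega)
      have huγ : G.MissingAt T₁ c₁ γ u := by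
        intro h hh huh hch
        by_cases hhc : h ∈ Lc
        · refine segC.not_mem_sup ?_ hhc huh
          intro k hk hku
          rw [hsupcElem k hk] at hku
          have hup : supQ[j'+1]'(by rw [hlenF]; omega) = u := by rw [← hts, huQ]
          have := apF.sup_inj (i := k) (j := j'+1) (by rw [hlenF]; omega)
            (by rw [hlenF]; omega) (by rw [hku, hup])
          omega
        · rw [hc₁def, swOn_not_mem hhc] at hch
          exact huniq h hh u (huQ ▸ hgsr) huh hch
      exact hfinal c₁ proper₁ γ apE.hβn huγ hvγ₁ hxα'₁ hyα' (Ne.symm hα'γ)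
    · -- swap the P-suffix after g*
      have hR1 : i' + 1 < L.length := by omega
      have hRlen : (L.drop (i'+1)).length = L.length - (i'+1) := List.length_drop ..
      have hsuprlen : (sup.drop (i'+1)).length = (L.drop (i'+1)).length + 1 := by
        rw [List.length_drop, List.length_drop, hlenE]
        omega
      have hRElem : ∀ k (hk : k < (L.drop (i'+1)).length),
          (L.drop (i'+1))[k] = L[i'+1+k]'(by rw [hRlen] at hk; omega) := by
        intro k hk
        simp [List.getElem_drop]
      have hsuprElem : ∀ k (hk : k < (sup.drop (i'+1)).length),
          (sup.drop (i'+1))[k] = sup[i'+1+k]'(by rw [List.length_drop] at hk; omega) := by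
        intro k hk
        simp [List.getElem_drop]
      have hRL : ∀ h ∈ L.drop (i'+1), h ∈ L := fun h hh => (List.drop_sublist _ _).mem hh
      have hRmem : ∀ h ∈ L.drop (i'+1), h ∈ T₁ := by
        intro h hh
        obtain ⟨k, hk, hkh⟩ := List.mem_iff_getElem.1 hh
        rw [hRElem k hk] at hkh
        refine hmemT₁ h (hkh ▸ apE.hmem _ (List.getElem_mem _)) ?_
        intro hcon
        rw [← hkh, ← hieq] at hcon
        have := (List.Nodup.getElem_inj_iff apE.nodupL).1 hcon
        omega
      have hRnotc : ∀ h ∈ L.drop (i'+1), h ∉ Lc := fun h hh hc' => hLcL h hc' (hRL h hh)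
      have segR : Seg G T₁ c₁ α γ (L.drop (i'+1)) (sup.drop (i'+1)) := by
        refine ⟨hsuprlen, ?_, (List.drop_sublist _ _).nodup apE.hnd, ?_, hRmem, ?_⟩
        · apply List.ne_nil_of_length_pos
          rw [hRlen]
          omega
        · intro k hk h1 h2
          rw [hRElem k hk, hsuprElem k h1, hsuprElem (k+1) h2]
          have h9 := apE.hinc (i'+1+k) (by rw [hRlen] at hk; omega)
            (by rw [hlenE, hRlen] at *; omega) (by rw [hlenE]; rw [hRlen] at hk; omega)
          rw [h9]
          have h10 : (sup[i'+1+k+1]'(by rw [hlenE]; rw [hRlen] at hk; omega))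
              = sup[i'+1+(k+1)]'(by rw [hlenE]; rw [hRlen] at hk; omega) := by
            congr 1 <;> omega
          rw [h10]
        · intro k hk
          have hmem9 : (L[i'+1+k]'(by rw [hRlen] at hk; omega)) ∈ L.drop (i'+1) := by
            have h8 := List.getElem_mem hk
            rwa [hRElem k hk] at h8
          rw [hRElem k hk, hc₁def, swOn_not_mem (hRnotc _ hmem9)]
          have h9 := apE.halt (i'+1+k) (by rw [hRlen] at hk; omega)
          rw [h9]
          rcases Nat.even_or_odd k with hev | hod
          · have e1 : k % 2 = 0 := Nat.even_iff.1 hev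
            have e2 : (i'+1+k) % 2 = 0 := by omega
            simp [e1, e2]
          · have e1 : k % 2 = 1 := Nat.odd_iff.1 hod
            have e2 : (i'+1+k) % 2 = 1 := by omega
            simp [e1, e2]
      have hsupr0 : ((sup.drop (i'+1))[0]'(by rw [hsuprlen]; omega))
          = sup[i'+1]'(by rw [hlenE]; omega) := by
        rw [hsuprElem 0 (by rw [hsuprlen]; omega)]
      have hsuprLast : ((sup.drop (i'+1))[(L.drop (i'+1)).length]'(by rw [hsuprlen]; omega))
          = u := by
        rw [hsuprElem _ (by rw [hsuprlen]; omega)]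
        have h9 : (sup[i'+1+(L.drop (i'+1)).length]'(by rw [hlenE, hRlen]; omega))
            = sup[L.length]'(by rw [hlenE]; omega) := by
          congr 1
          rw [hRlen]
          omega
        rw [h9]
        exact apE.supLast (by rw [hlenE]; omega)
      have hE1R : ∀ h ∈ T₁, h ∉ L.drop (i'+1) → ∀ (h0 : 0 < (sup.drop (i'+1)).length),
          (sup.drop (i'+1))[0] ∈ G.inc h → c₁ h ≠ γ := by
        intro h hh hhR h0 hzh hch
        rw [hsupr0] at hzh
        by_cases hhc : h ∈ Lc
        · refine segC.not_mem_sup ?_ hhc hzh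
          intro k hk hku
          rw [hsupcElem k hk] at hku
          have := apF.sup_inj (i := k) (j := j'+1) (by rw [hlenF]; omega)
            (by rw [hlenF]; omega) (by rw [hku, ← hts])
          omega
        · rw [hc₁def, swOn_not_mem hhc] at hch
          exact huniq h hh _ hgsr hzh hch
      have hRevlen : (L.drop (i'+1)).length % 2 = 0 := by
        rw [hRlen]
        omega
      have hE2R : ∀ h ∈ T₁, h ∉ L.drop (i'+1) →
          ∀ (hl : (L.drop (i'+1)).length < (sup.drop (i'+1)).length),
          (sup.drop (i'+1))[(L.drop (i'+1)).length] ∈ G.inc h →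
          c₁ h ≠ (if (L.drop (i'+1)).length % 2 = 0 then α else γ) := by
        intro h hh hhR hl hzh hch
        rw [if_pos hRevlen] at hch
        rw [hsuprLast] at hzh
        by_cases hhc : h ∈ Lc
        · rw [hc₁def, swOn_mem hhc] at hch
          have hcol : c h = α' ∨ c h = γ := by
            obtain ⟨k, hk, hkh⟩ := List.mem_iff_getElem.1 hhc
            rw [← hkh, hLcElem k hk]
            have h9 := apF.halt k (by omega)
            rw [h9]
            split <;> simp
          rcases hcol with h9 | h9 <;> rw [h9] at hch
          · rw [if_pos rfl] at hch
            exact hαγ hch.symm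
          · rw [if_neg (Ne.symm hα'γ)] at hch
            exact haa hch.symm
        · rw [hc₁def, swOn_not_mem hhc] at hch
          exact apE.hmu h (hT1S hh) hzh hch
      have proper₂ : G.ProperOn T₁ (swOn c₁ α γ (L.drop (i'+1))) G.maxDeg :=
        swapSeg_proper proper₁ segR apE.hαn apE.hβn apE.hαβ hE1R hE2R
      have huγ₂ : G.MissingAt T₁ (swOn c₁ α γ (L.drop (i'+1))) γ u := by
        have h9 := swapSeg_missing_last proper₁ segR apE.hαβ hRevlen
          (by rw [hsuprlen]; omega)
        rwa [hsuprLast] at h9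
      have hvnotr : ∀ k (hk : k < (sup.drop (i'+1)).length), (sup.drop (i'+1))[k] ≠ v := by
        intro k hk hkv
        rw [hsuprElem k hk] at hkv
        have hv0 : (sup[0]'(by rw [hlenE]; omega)) = v := apE.sup0 _
        have := apE.sup_inj (i := i'+1+k) (j := 0)
          (by rw [List.length_drop] at hk; omega) (by rw [hlenE]; omega) (by rw [hkv, hv0])
        omega
      have hvγ₂ : G.MissingAt T₁ (swOn c₁ α γ (L.drop (i'+1))) γ v :=
        swapSeg_missing_not_sup segR hvnotr hvγ₁
      have hxα'₂ : G.MissingAt T₁ (swOn c₁ α γ (L.drop (i'+1))) α' x :=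
        swapSeg_missing_pres (Ne.symm haa) hα'γ hxα'₁
      have hyα'₂ : G.MissingAt T₁ (swOn c₁ α γ (L.drop (i'+1))) α' y :=
        swapSeg_missing_pres (Ne.symm haa) hα'γ hyα'
      exact hfinal _ proper₂ γ apE.hβn huγ₂ hvγ₂ hxα'₂ hyα'₂ (Ne.symm hα'γ)
  · -- OPPOSITE direction
    have hi1 : 0 < i' := by omega
    have hRlen : (L.take i').length = i' := by rw [List.length_take]; omega
    have hsuprlen : (sup.take (i'+1)).length = (L.take i').length + 1 := by
      rw [List.length_take, List.length_take, hlenE]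
      omega
    have hRElem : ∀ k (hk : k < (L.take i').length),
        (L.take i')[k] = L[k]'(by rw [hRlen] at hk; omega) := by
      intro k hk
      exact List.getElem_take ..
    have hsuprElem : ∀ k (hk : k < (sup.take (i'+1)).length),
        (sup.take (i'+1))[k] = sup[k]'(by rw [List.length_take] at hk; rw [hlenE]; omega) := by
      intro k hk
      exact List.getElem_take ..
    have hRL : ∀ h ∈ L.take i', h ∈ L := fun h hh => (List.take_sublist _ _).mem hh
    have hRmem : ∀ h ∈ L.take i', h ∈ T₁ := by
      intro h hh
      obtain ⟨k, hk, hkh⟩ := List.mem_iff_getElem.1 hh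
      rw [hRElem k hk] at hkh
      refine hmemT₁ h (hkh ▸ apE.hmem _ (List.getElem_mem _)) ?_
      intro hcon
      rw [← hkh, ← hieq] at hcon
      have := (List.Nodup.getElem_inj_iff apE.nodupL).1 hcon
      rw [hRlen] at hk
      omega
    have hRnotc : ∀ h ∈ L.take i', h ∉ Lc := fun h hh hc' => hLcL h hc' (hRL h hh)
    have segR : Seg G T₁ c₁ α γ (L.take i') (sup.take (i'+1)) := by
      refine ⟨hsuprlen, ?_, (List.take_sublist _ _).nodup apE.hnd, ?_, hRmem, ?_⟩
      · apply List.ne_nil_of_length_pos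
        rw [hRlen]
        omega
      · intro k hk h1 h2
        rw [hRElem k hk, hsuprElem k h1, hsuprElem (k+1) h2]
        exact apE.hinc k (by rw [hRlen] at hk; omega) (by rw [hlenE]; rw [hRlen] at hk; omega)
          (by rw [hlenE]; rw [hRlen] at hk; omega)
      · intro k hk
        have hmem9 : (L[k]'(by rw [hRlen] at hk; omega)) ∈ L.take i' := by
          have h8 := List.getElem_mem hk
          rwa [hRElem k hk] at h8
        rw [hRElem k hk, hc₁def, swOn_not_mem (hRnotc _ hmem9)]
        exact apE.halt k (by rw [hRlen] at hk; omega)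
    have hsupr0 : ((sup.take (i'+1))[0]'(by rw [hsuprlen]; omega)) = v := by
      rw [hsuprElem 0 (by rw [hsuprlen]; omega)]
      exact apE.sup0 _
    have hsuprLast : ((sup.take (i'+1))[(L.take i').length]'(by rw [hsuprlen]; omega))
        = sup[i']'(by omega) := by
      rw [hsuprElem _ (by rw [hsuprlen]; omega)]
      congr 1 <;> rw [hRlen]
    have hE1R : ∀ h ∈ T₁, h ∉ L.take i' → ∀ (h0 : 0 < (sup.take (i'+1)).length),
        (sup.take (i'+1))[0] ∈ G.inc h → c₁ h ≠ γ := by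
      intro h hh hhR h0 hzh hch
      rw [hsupr0] at hzh
      by_cases hhc : h ∈ Lc
      · exact segC.not_mem_sup hvnotc hhc hzh
      · rw [hc₁def, swOn_not_mem hhc] at hch
        exact apE.hmv h (hT1S hh) hzh hch
    have hE2R : ∀ h ∈ T₁, h ∉ L.take i' →
        ∀ (hl : (L.take i').length < (sup.take (i'+1)).length),
        (sup.take (i'+1))[(L.take i').length] ∈ G.inc h →
        c₁ h ≠ (if (L.take i').length % 2 = 0 then α else γ) := by
      intro h hh hhR hl hzh hch
      rw [hsuprLast] at hzh
      rw [show (if (L.take i').length % 2 = 0 then α else γ) = γ by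
        rw [if_neg]; rw [hRlen]; omega] at hch
      by_cases hhc : h ∈ Lc
      · refine segC.not_mem_sup ?_ hhc hzh
        intro k hk hku
        rw [hsupcElem k hk] at hku
        have := apF.sup_inj (i := k) (j := j'+1) (by rw [hlenF]; omega)
          (by rw [hlenF]; omega) (by rw [hku, ← hso])
        omega
      · rw [hc₁def, swOn_not_mem hhc] at hch
        exact huniq h hh _ hgsl hzh hch
    have proper₂ : G.ProperOn T₁ (swOn c₁ α γ (L.take i')) G.maxDeg :=
      swapSeg_proper proper₁ segR apE.hαn apE.hβn apE.hαβ hE1R hE2R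
    have hvα₂ : G.MissingAt T₁ (swOn c₁ α γ (L.take i')) α v := by
      have h9 := swapSeg_missing_head proper₁ segR apE.hαβ (by rw [hsuprlen]; omega)
      rwa [hsupr0] at h9
    have hunotr : ∀ k (hk : k < (sup.take (i'+1)).length), (sup.take (i'+1))[k] ≠ u := by
      intro k hk hku
      rw [hsuprElem k hk] at hku
      have hu0 : (sup[L.length]'(by rw [hlenE]; omega)) = u := apE.supLast _
      have := apE.sup_inj (i := k) (j := L.length)
        (by rw [List.length_take] at hk; rw [hlenE]; omega) (by rw [hlenE]; omega)
        (by rw [hku, hu0])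
      rw [List.length_take] at hk
      omega
    have huα₁ : G.MissingAt T₁ c₁ α u :=
      swapSeg_missing_pres haa hαγ (apE.hmu.mono hT1S)
    have huα₂ : G.MissingAt T₁ (swOn c₁ α γ (L.take i')) α u :=
      swapSeg_missing_not_sup segR hunotr huα₁
    have hxα'₂ : G.MissingAt T₁ (swOn c₁ α γ (L.take i')) α' x :=
      swapSeg_missing_pres (Ne.symm haa) hα'γ hxα'₁
    have hyα'₂ : G.MissingAt T₁ (swOn c₁ α γ (L.take i')) α' y :=
      swapSeg_missing_pres (Ne.symm haa) hα'γ hyα'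
    exact hfinal _ proper₂ α apE.hαn huα₂ hvα₂ hxα'₂ hyα'₂ haa

end Multigraph
namespace Multigraph

open scoped Classical

set_option maxHeartbeats 4000000
set_option linter.unusedSectionVars false
set_option linter.unusedVariables false

variable {V E : Type} [Fintype V] [Fintype E] {G : Multigraph V E} {S : Set E} {c : E → ℕ}
  {n : ℕ}

lemma AltPath.color_mem {α β : ℕ} {u v : V} {L : List E} {sup : List V}
    (ap : AltPath G S c n α β u v L sup) {g : E} (hg : g ∈ L) : c g = α ∨ c g = β := by
  obtain ⟨i, hi, rfl⟩ := ap.mem_getElem hg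
  rw [ap.halt i hi]
  split <;> simp

/-- the colour assigned to the uncoloured edge `e` at its endpoint `z` -/
noncomputable def colorOf (G : Multigraph V E) (S : Set E) (c : E → ℕ) (z : V) (e : E) : ℕ :=
  (missSet G S c G.maxDeg z).toList.getD ((uncSet G S z).toList.idxOf e) 0

lemma colorOf_lt (hc : G.ProperOn S c G.maxDeg) {z : V} {e : E}
    (he : e ∉ S) (hz : z ∈ G.inc e) :
    colorOf G S c z e < G.maxDeg ∧ G.MissingAt S c (colorOf G S c z e) z := by
  have hmem : e ∈ (uncSet G S z).toList := Finset.mem_toList.2 (mem_uncSet.2 ⟨he, hz⟩)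
  have hidx : (uncSet G S z).toList.idxOf e < (uncSet G S z).toList.length :=
    List.idxOf_lt_length_iff.2 hmem
  have hlen : (uncSet G S z).toList.length ≤ (missSet G S c G.maxDeg z).toList.length := by
    rw [Finset.length_toList, Finset.length_toList]
    exact card_uncSet_le hc z (deg_le_maxDeg z)
  have hidx2 : (uncSet G S z).toList.idxOf e < (missSet G S c G.maxDeg z).toList.length := by
    omega
  have hget : colorOf G S c z e
      = (missSet G S c G.maxDeg z).toList[(uncSet G S z).toList.idxOf e] := by
    rw [colorOf]
    exact List.getD_eq_getElem _ _ hidx2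
  have hmem2 : colorOf G S c z e ∈ missSet G S c G.maxDeg z := by
    rw [hget, ← Finset.mem_toList]
    exact List.getElem_mem _
  exact mem_missSet.1 hmem2

lemma colorOf_inj (hc : G.ProperOn S c G.maxDeg) {z : V} {e f : E}
    (he : e ∉ S) (hze : z ∈ G.inc e) (hf : f ∉ S) (hzf : z ∈ G.inc f)
    (h : colorOf G S c z e = colorOf G S c z f) : e = f := by
  have hmeme : e ∈ (uncSet G S z).toList := Finset.mem_toList.2 (mem_uncSet.2 ⟨he, hze⟩)
  have hmemf : f ∈ (uncSet G S z).toList := Finset.mem_toList.2 (mem_uncSet.2 ⟨hf, hzf⟩)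
  have hidxe : (uncSet G S z).toList.idxOf e < (uncSet G S z).toList.length :=
    List.idxOf_lt_length_iff.2 hmeme
  have hidxf : (uncSet G S z).toList.idxOf f < (uncSet G S z).toList.length :=
    List.idxOf_lt_length_iff.2 hmemf
  have hlen : (uncSet G S z).toList.length ≤ (missSet G S c G.maxDeg z).toList.length := by
    rw [Finset.length_toList, Finset.length_toList]
    exact card_uncSet_le hc z (deg_le_maxDeg z)
  have hgete : colorOf G S c z e
      = (missSet G S c G.maxDeg z).toList[(uncSet G S z).toList.idxOf e]'(by omega) := by
    rw [colorOf]
    exact List.getD_eq_getElem _ _ (by omega)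
  have hgetf : colorOf G S c z f
      = (missSet G S c G.maxDeg z).toList[(uncSet G S z).toList.idxOf f]'(by omega) := by
    rw [colorOf]
    exact List.getD_eq_getElem _ _ (by omega)
  rw [hgete, hgetf] at h
  have hnd : (missSet G S c G.maxDeg z).toList.Nodup := Finset.nodup_toList _
  have hidxeq := (List.Nodup.getElem_inj_iff hnd).1 h
  have := List.idxOf_inj hmeme |>.1 hidxeq
  exact this

end Multigraph
set_option maxHeartbeats 4000000 in
open scoped Classical in
/-- final theorem -/
theorem exists_pairwise_disjoint_kempeCycles'
    {V E : Type} [Fintype V] [Fintype E] (G : Multigraph V E)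
    (S : Set E) (hS : G.IsMaxColorable S)
    (c : E → ℕ) (hc : G.ProperOn S c G.maxDeg) :
    ∃ (a b : E → ℕ) (C : E → Set E),
      (∀ e : E, e ∉ S → G.IsKempeCycle S c e (a e) (b e) (C e)) ∧
      (∀ e f : E, e ∉ S → f ∉ S → e ≠ f → C e ∩ C f = ∅) := by
  classical
  choose u_ v_ hne_ hinc_ using G.exists_endpoints
  have hu_mem : ∀ e : E, (u_ e) ∈ G.inc e := fun e => by
    rw [hinc_ e]; exact Sym2.mem_mk_left _ _
  have hv_mem : ∀ e : E, (v_ e) ∈ G.inc e := fun e => by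
    rw [hinc_ e]; exact Sym2.mem_mk_right _ _
  have hA : ∀ e, e ∉ S → Multigraph.colorOf G S c (u_ e) e < G.maxDeg ∧
      G.MissingAt S c (Multigraph.colorOf G S c (u_ e) e) (u_ e) :=
    fun e he => Multigraph.colorOf_lt hc he (hu_mem e)
  have hB : ∀ e, e ∉ S → Multigraph.colorOf G S c (v_ e) e < G.maxDeg ∧
      G.MissingAt S c (Multigraph.colorOf G S c (v_ e) e) (v_ e) :=
    fun e he => Multigraph.colorOf_lt hc he (hv_mem e)
  have H : ∀ e : E, ∃ (L : List E) (sup : List V),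
      e ∉ S → Multigraph.AltPath G S c G.maxDeg (Multigraph.colorOf G S c (u_ e) e)
        (Multigraph.colorOf G S c (v_ e) e) (u_ e) (v_ e) L sup := by
    intro e
    by_cases he : e ∈ S
    · exact ⟨[], [], fun h => absurd he h⟩
    · obtain ⟨L, sup, hap⟩ := Multigraph.exists_altPath hS hc he (hinc_ e)
        (hA e he).1 (hA e he).2 (hB e he).1 (hB e he).2
      exact ⟨L, sup, fun _ => hap⟩
  choose L_ sup_ hAP using H
  refine ⟨fun e => Multigraph.colorOf G S c (u_ e) e,
    fun e => Multigraph.colorOf G S c (v_ e) e,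
    fun e => insert e {g | g ∈ L_ e}, ?_, ?_⟩
  · intro e he
    exact (hAP e he).isKempe hc (hinc_ e)
  · intro e f he hf hef
    have ap1 := hAP e he
    have ap2 := hAP f hf
    have hinj : ∀ (z : V) (e' f' : E), e' ∉ S → f' ∉ S → z ∈ G.inc e' → z ∈ G.inc f' →
        Multigraph.colorOf G S c z e' = Multigraph.colorOf G S c z f' → e' = f' :=
      fun z e' f' h1 h2 h3 h4 h5 => Multigraph.colorOf_inj hc h1 h3 h2 h4 h5
    have hnc : ∀ (e' : E), e' ∉ S → ∀ ρ, ρ < G.maxDeg → G.MissingAt S c ρ (u_ e') →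
        G.MissingAt S c ρ (v_ e') → False :=
      fun e' h1 ρ h2 h3 h4 => Multigraph.no_common_missing hS hc h1 (hinc_ e') h2 h3 h4
    have hLM : ∀ g, g ∈ L_ e → g ∈ L_ f → False := by
      intro g hg1 hg2
      have hcg1 := ap1.color_mem hg1
      have hcg2 := ap2.color_mem hg2
      by_cases hpar : G.inc e = G.inc f
      · -- parallel edges : any colour coincidence is impossible
        have hpar2 : s(u_ e, v_ e) = s(u_ f, v_ f) := by rw [← hinc_ e, ← hinc_ f, hpar]
        rw [Sym2.eq_iff] at hpar2
        rcases hcg1 with h1 | h1 <;> rcases hcg2 with h2 | h2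
        · -- a e = a f
          have heq := h1.symm.trans h2
          rcases hpar2 with ⟨hA1, hA2⟩ | ⟨hA1, hA2⟩
          · exact hef (hinj (u_ e) e f he hf (hu_mem e) (by rw [hA1]; exact hu_mem f)
              (heq.trans (congrArg (fun z => Multigraph.colorOf G S c z f) hA1.symm)))
          · refine hnc e he _ (hA e he).1 (hA e he).2 ?_
            rw [heq, hA2]
            exact (hA f hf).2
        · -- a e = b f
          have heq := h1.symm.trans h2
          rcases hpar2 with ⟨hA1, hA2⟩ | ⟨hA1, hA2⟩
          · refine hnc e he _ (hA e he).1 (hA e he).2 ?_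
            rw [heq, hA2]
            exact (hB f hf).2
          · exact hef (hinj (u_ e) e f he hf (hu_mem e) (by rw [hA1]; exact hv_mem f)
              (heq.trans (congrArg (fun z => Multigraph.colorOf G S c z f) hA1.symm)))
        · -- b e = a f
          have heq := h1.symm.trans h2
          rcases hpar2 with ⟨hA1, hA2⟩ | ⟨hA1, hA2⟩
          · refine hnc e he _ (hB e he).1 ?_ (hB e he).2
            rw [heq, hA1]
            exact (hA f hf).2
          · exact hef (hinj (v_ e) e f he hf (hv_mem e) (by rw [hA2]; exact hu_mem f)
              (heq.trans (congrArg (fun z => Multigraph.colorOf G S c z f) hA2.symm)))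
        · -- b e = b f
          have heq := h1.symm.trans h2
          rcases hpar2 with ⟨hA1, hA2⟩ | ⟨hA1, hA2⟩
          · exact hef (hinj (v_ e) e f he hf (hv_mem e) (by rw [hA2]; exact hv_mem f)
              (heq.trans (congrArg (fun z => Multigraph.colorOf G S c z f) hA2.symm)))
          · refine hnc e he _ (hB e he).1 ?_ (hB e he).2
            rw [heq, hA1]
            exact (hB f hf).2
      · -- non-parallel
        rcases hcg1 with h1 | h1 <;> rcases hcg2 with h2 | h2
        · -- common colour γ = a e = a f : reverse both paths
          have heq : Multigraph.colorOf G S c (u_ f) f = Multigraph.colorOf G S c (u_ e) e :=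
            h2.symm.trans h1
          have ap2' := ap2.rev
          rw [heq] at ap2'
          have hvy : u_ e ≠ u_ f := by
            intro hvv
            exact hef (hinj (u_ e) e f he hf (hu_mem e) (by rw [hvv]; exact hu_mem f)
              (heq.symm.trans (congrArg (fun z => Multigraph.colorOf G S c z f) hvv.symm)))
          by_cases hbb : Multigraph.colorOf G S c (v_ f) f = Multigraph.colorOf G S c (v_ e) e
          · have ap2'' := ap2'
            rw [hbb] at ap2''
            have hp := Multigraph.eq_pair_parallel hc ap1.rev ap2''
              (List.mem_reverse.2 hg1) (List.mem_reverse.2 hg2)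
            refine hpar ?_
            rw [hinc_ e, hinc_ f]
            calc s(u_ e, v_ e) = s(v_ e, u_ e) := Sym2.eq_swap
              _ = s(v_ f, u_ f) := hp
              _ = s(u_ f, v_ f) := Sym2.eq_swap
          · exact Multigraph.main_disjoint hS hc he hf hef
              (by rw [hinc_ e]; exact Sym2.eq_swap) (by rw [hinc_ f]; exact Sym2.eq_swap)
              ap1.rev ap2' (fun hh => hbb (by rw [hh])) hvy
              (List.mem_reverse.2 hg1) (List.mem_reverse.2 hg2)
        · -- γ = a e = b f : reverse the first path only
          have heq : Multigraph.colorOf G S c (v_ f) f = Multigraph.colorOf G S c (u_ e) e :=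
            h2.symm.trans h1
          have ap2' := ap2
          rw [heq] at ap2'
          have hvy : u_ e ≠ v_ f := by
            intro hvv
            exact hef (hinj (u_ e) e f he hf (hu_mem e) (by rw [hvv]; exact hv_mem f)
              (heq.symm.trans (congrArg (fun z => Multigraph.colorOf G S c z f) hvv.symm)))
          by_cases hbb : Multigraph.colorOf G S c (u_ f) f = Multigraph.colorOf G S c (v_ e) e
          · have ap2'' := ap2'
            rw [hbb] at ap2''
            have hp := Multigraph.eq_pair_parallel hc ap1.rev ap2''
              (List.mem_reverse.2 hg1) hg2
            refine hpar ?_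
            rw [hinc_ e, hinc_ f]
            calc s(u_ e, v_ e) = s(v_ e, u_ e) := Sym2.eq_swap
              _ = s(u_ f, v_ f) := hp
          · exact Multigraph.main_disjoint hS hc he hf hef
              (by rw [hinc_ e]; exact Sym2.eq_swap) (hinc_ f)
              ap1.rev ap2' (fun hh => hbb (by rw [hh])) hvy
              (List.mem_reverse.2 hg1) hg2
        · -- γ = b e = a f : reverse the second path only
          have heq : Multigraph.colorOf G S c (u_ f) f = Multigraph.colorOf G S c (v_ e) e :=
            h2.symm.trans h1
          have ap2' := ap2.rev
          rw [heq] at ap2'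
          have hvy : v_ e ≠ u_ f := by
            intro hvv
            exact hef (hinj (v_ e) e f he hf (hv_mem e) (by rw [hvv]; exact hu_mem f)
              (heq.symm.trans (congrArg (fun z => Multigraph.colorOf G S c z f) hvv.symm)))
          by_cases hbb : Multigraph.colorOf G S c (v_ f) f = Multigraph.colorOf G S c (u_ e) e
          · have ap2'' := ap2'
            rw [hbb] at ap2''
            have hp := Multigraph.eq_pair_parallel hc ap1 ap2''
              hg1 (List.mem_reverse.2 hg2)
            refine hpar ?_
            rw [hinc_ e, hinc_ f]
            calc s(u_ e, v_ e) = s(v_ f, u_ f) := hp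
              _ = s(u_ f, v_ f) := Sym2.eq_swap
          · exact Multigraph.main_disjoint hS hc he hf hef
              (hinc_ e) (by rw [hinc_ f]; exact Sym2.eq_swap)
              ap1 ap2' (fun hh => hbb (by rw [hh])) hvy
              hg1 (List.mem_reverse.2 hg2)
        · -- γ = b e = b f : no reversals
          have heq : Multigraph.colorOf G S c (v_ f) f = Multigraph.colorOf G S c (v_ e) e :=
            h2.symm.trans h1
          have ap2' := ap2
          rw [heq] at ap2'
          have hvy : v_ e ≠ v_ f := by
            intro hvv
            exact hef (hinj (v_ e) e f he hf (hv_mem e) (by rw [hvv]; exact hv_mem f)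
              (heq.symm.trans (congrArg (fun z => Multigraph.colorOf G S c z f) hvv.symm)))
          by_cases hbb : Multigraph.colorOf G S c (u_ f) f = Multigraph.colorOf G S c (u_ e) e
          · have ap2'' := ap2'
            rw [hbb] at ap2''
            have hp := Multigraph.eq_pair_parallel hc ap1 ap2'' hg1 hg2
            refine hpar ?_
            rw [hinc_ e, hinc_ f]
            exact hp
          · exact Multigraph.main_disjoint hS hc he hf hef
              (hinc_ e) (hinc_ f)
              ap1 ap2' (fun hh => hbb (by rw [hh])) hvy hg1 hg2
    apply Set.eq_empty_iff_forall_notMem.2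
    intro g hg
    obtain ⟨hg1, hg2⟩ := hg
    rcases Set.mem_insert_iff.1 hg1 with rfl | hg1
    · rcases Set.mem_insert_iff.1 hg2 with h | h
      · exact hef h
      · exact he (ap2.hmem _ h)
    · rcases Set.mem_insert_iff.1 hg2 with h | h
      · exact hf (ap1.hmem _ (h ▸ hg1))
      · exact hLM _ hg1 h

/-- Theorem 3 of the paper. Let `H` (edge set `S`) be a
maximum `Δ(G)`-edge-colorable subgraph of a loopless multigraph `G`, properly
colored by `c` with `Δ(G)` colors.  Then to every uncolored edge `e ∉ S` one
can assign colors `a e` and `b e`, missing at its two endpoints respectively,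
such that the corresponding odd cycles `C^e_{a e, b e}` are pairwise
edge-disjoint. -/
theorem exists_pairwise_disjoint_kempeCycles
    {V E : Type} [Fintype V] [Fintype E] (G : Multigraph V E)
    (S : Set E) (hS : G.IsMaxColorable S)
    (c : E → ℕ) (hc : G.ProperOn S c G.maxDeg) :
    ∃ (a b : E → ℕ) (C : E → Set E),
      (∀ e : E, e ∉ S → G.IsKempeCycle S c e (a e) (b e) (C e)) ∧
      (∀ e f : E, e ∉ S → f ∉ S → e ≠ f → C e ∩ C f = ∅) :=
  exists_pairwise_disjoint_kempeCycles' G S hS c hc
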